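/- arXiv:2509.05827 — 10 statements merged into one kernel-verified Lean document; each statement's English description precedes it below -/
import Mathlib

section
/- For every k ≥ 1, the Zimin word Z_k over the alphabet {1,...,k}, defined by Z_1 = 1 and Z_i = Z_{i-1} · i · Z_{i-1}, is s-primitive, i.e., it has no s-cover of length strictly less than |Z_k|. -/
/-- `C` is an s-cover of `S`: `C` occurs in `S` as a subsequence, and every
position of `S` belongs to some occurrence of `C` as a subsequence, i.e. a
strictly increasing list of positions of `S` spelling `C`. -/
def IsSCover {α : Type*} (C S : List α) : Prop :=
  C.Sublist S ∧
    ∀ i : Fin S.length, ∃ I : List (Fin S.length),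
      I.Chain' (fun a b => (a : ℕ) < (b : ℕ)) ∧ i ∈ I ∧ I.map S.get = C

/-- A word is s-primitive if it has no s-cover strictly shorter than itself. -/
def SPrimitive {α : Type*} (S : List α) : Prop :=
  ∀ C : List α, IsSCover C S → S.length ≤ C.length


/-- The Zimin words: `zimin 1 = [1]`, `zimin (i+1) = zimin i ++ [i+1] ++ zimin i`. -/
def zimin : ℕ → List ℕ
  | 0 => []
  | n + 1 => zimin n ++ [n + 1] ++ zimin n


lemma coe_flatMap {n : ℕ} (I : List (Fin n)) :
    (I.flatMap fun (a : Fin n) => [(a : ℕ)]) = I.map Fin.val := by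
  induction I with
  | nil => rfl
  | cons a I ih => simp [List.flatMap_cons, ih]

lemma chainP {n : ℕ} {I : List (Fin n)} :
    I.Chain' (fun a b => (a : ℕ) < (b : ℕ)) ↔ I.Pairwise (fun a b => a.val < b.val) := by
  show List.IsChain (· < ·) (I.flatMap fun (a : Fin n) => [(a : ℕ)]) ↔ _
  rw [coe_flatMap, List.isChain_iff_pairwise, List.pairwise_map]

lemma mem_zimin_le {n x : ℕ} (hx : x ∈ zimin n) : x ≤ n := by
  induction n with
  | zero => simp [zimin] at hx
  | succ n ih =>
    simp only [zimin, List.mem_append, List.mem_singleton] at hx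
    rcases hx with (hx | hx) | hx
    · exact (ih hx).trans (Nat.le_succ n)
    · omega
    · exact (ih hx).trans (Nat.le_succ n)

lemma not_mem_zimin {n x : ℕ} (h : n < x) : x ∉ zimin n :=
  fun hx => absurd (mem_zimin_le hx) (by omega)

lemma split_unique {α : Type*} {a : α} {X1 : List α} :
    ∀ {X2 Y1 Y2 : List α}, X1 ++ a :: Y1 = X2 ++ a :: Y2 → a ∉ X1 → a ∉ X2 →
      X1 = X2 ∧ Y1 = Y2 := by
  induction X1 with
  | nil =>
    intro X2 Y1 Y2 h h1 h2
    cases X2 with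
    | nil => simpa using h
    | cons x X2 =>
      simp only [List.nil_append, List.cons_append, List.cons.injEq] at h
      exact absurd (h.1 ▸ List.mem_cons_self) h2
  | cons x X1 ih =>
    intro X2 Y1 Y2 h h1 h2
    cases X2 with
    | nil =>
      simp only [List.nil_append, List.cons_append, List.cons.injEq] at h
      exact absurd (h.1 ▸ List.mem_cons_self) h1
    | cons y X2 =>
      simp only [List.cons_append, List.cons.injEq] at h
      obtain ⟨hxy, ht⟩ := h
      simp only [List.mem_cons, not_or] at h1 h2
      obtain ⟨h1', h2'⟩ := ih ht h1.2 h2.2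
      exact ⟨by rw [hxy, h1'], h2'⟩

lemma sprim_step {L : List ℕ} {c : ℕ} (hc : c ∉ L) (ihL : SPrimitive L) :
    SPrimitive (L ++ c :: L) := by
  intro C hC
  obtain ⟨hsub, hcov⟩ := hC
  set S : List ℕ := L ++ c :: L with hSdef
  set m : ℕ := L.length with hmdef
  have hSlen : S.length = m + (m + 1) := by simp [hSdef, hmdef]
  have hmlt : m < S.length := by omega
  set mid : Fin S.length := ⟨m, hmlt⟩ with hmiddef
  -- getElem facts
  have hget_lt : ∀ (p : ℕ) (hp : p < m) (hp' : p < S.length), S[p]'hp' = L[p]'hp :=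
    fun p hp hp' => List.getElem_append_left hp
  have hget_mid : S.get mid = c := by
    show S[m] = c
    rw [List.getElem_append_right (le_refl m)]
    simp [hmdef]
  have hget_gt : ∀ (p : ℕ) (hp' : p < S.length) (hp : m < p),
      S[p]'hp' = L[p - (m + 1)]'(by omega) := by
    intro p hp' hp
    rw [List.getElem_append_right (by omega : L.length ≤ p)]
    have h2 : p - m = (p - (m + 1)) + 1 := by omega
    simp only [← hmdef, h2, List.getElem_cons_succ]
  have hval : ∀ p : Fin S.length, S.get p = c ↔ (p : ℕ) = m := by
    intro p
    constructor
    · intro h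
      by_contra hne
      rcases Nat.lt_or_ge (p : ℕ) m with hlt | hge
      · have h3 := hget_lt p hlt p.isLt
        rw [show S.get p = S[(p : ℕ)] from rfl, h3] at h
        exact hc (h ▸ List.getElem_mem _)
      · have hgt : m < (p : ℕ) := lt_of_le_of_ne hge (Ne.symm hne)
        have h3 := hget_gt p p.isLt hgt
        rw [show S.get p = S[(p : ℕ)] from rfl, h3] at h
        exact hc (h ▸ List.getElem_mem _)
    · intro h
      have : p = mid := Fin.ext h
      rw [this, hget_mid]
  -- c ∈ C
  obtain ⟨I0, hI0c, hI0m, hI0map⟩ := hcov mid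
  have hcC : c ∈ C := by
    rw [← hI0map, ← hget_mid]
    exact List.mem_map_of_mem (f := S.get) hI0m
  -- count of c in C is 1, obtain split
  have hcount : C.count c ≤ 1 := by
    have h1 := hsub.count_le c
    have h2 : S.count c = 1 := by
      simp [hSdef, List.count_append, List.count_cons, List.count_eq_zero_of_not_mem hc]
    omega
  obtain ⟨A, B, hCsplit⟩ := List.append_of_mem hcC
  have hcA : c ∉ A := by
    intro h
    have hp := List.count_pos_iff.2 h
    rw [hCsplit] at hcount
    simp [List.count_append, List.count_cons] at hcount
    omega
  have hcB : c ∉ B := by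
    intro h
    have hp := List.count_pos_iff.2 h
    rw [hCsplit] at hcount
    simp [List.count_append, List.count_cons] at hcount
    omega
  -- key splitting lemma for occurrences
  have key : ∀ I : List (Fin S.length), I.Chain' (fun a b => (a : ℕ) < (b : ℕ)) →
      I.map S.get = C → ∃ IA IB : List (Fin S.length),
        I = IA ++ mid :: IB ∧ IA.map S.get = A ∧ IB.map S.get = B ∧
        (∀ a ∈ IA, a.val < m) ∧ (∀ b ∈ IB, m < b.val) := by
    intro I hIc hImap
    have hcI : ∃ j ∈ I, S.get j = c := by
      have h : c ∈ I.map S.get := hImap ▸ hcC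
      simpa using h
    obtain ⟨j, hjI, hjval⟩ := hcI
    have hjmid : j = mid := Fin.ext ((hval j).1 hjval)
    subst hjmid
    obtain ⟨IA, IB, hIsplit⟩ := List.append_of_mem hjI
    have hpI : I.Pairwise (fun a b => a.val < b.val) := chainP.mp hIc
    rw [hIsplit, List.pairwise_append] at hpI
    obtain ⟨hpA, hpB', hAB⟩ := hpI
    rw [List.pairwise_cons] at hpB'
    obtain ⟨hmB, hpB⟩ := hpB'
    have hAlt : ∀ a ∈ IA, a.val < m := fun a ha => hAB a ha mid List.mem_cons_self
    have hBgt : ∀ b ∈ IB, m < b.val := hmB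
    have hmapsplit : IA.map S.get ++ c :: IB.map S.get = A ++ c :: B := by
      rw [← hCsplit, ← hImap, hIsplit]
      simp only [List.map_append, List.map_cons]
      rw [hget_mid]
    have hcIA : c ∉ IA.map S.get := by
      intro h
      obtain ⟨a, haIA, hav⟩ := List.mem_map.1 h
      have h1 := (hval a).1 hav
      have h2 := hAlt a haIA
      omega
    exact ⟨IA, IB, hIsplit, (split_unique hmapsplit hcIA hcA).1,
      (split_unique hmapsplit hcIA hcA).2, hAlt, hBgt⟩
  have hpI0 : I0.Pairwise (fun a b => a.val < b.val) := chainP.mp hI0c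
  -- A is an s-cover of L
  have hcovA : IsSCover A L := by
    have mapeq : ∀ (IA : List (Fin S.length)) (hAlt : ∀ a ∈ IA, a.val < m),
        (List.pmap (fun (a : Fin S.length) (h : a.val < m) => (⟨a.val, h⟩ : Fin L.length))
          IA hAlt).map L.get = IA.map S.get := by
      intro IA
      induction IA with
      | nil => intro _; rfl
      | cons a IA ih =>
        intro hAlt
        have hh := hAlt a List.mem_cons_self
        simp only [List.pmap, List.map_cons]
        rw [ih (fun x hx => hAlt x (List.mem_cons_of_mem a hx))]
        congr 1
        exact (hget_lt a hh a.isLt).symm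
    constructor
    · obtain ⟨IA, IB, hI0split, hIAmap, _, hAlt, _⟩ := key I0 hI0c hI0map
      rw [← hIAmap, ← mapeq IA hAlt]
      apply List.map_getElem_sublist
      exact (hpI0.sublist (by rw [hI0split]; exact List.sublist_append_left _ _)).pmap hAlt
        (fun x hx y hy hxy => hxy)
    · intro i
      have hi' : (i : ℕ) < S.length := by omega
      obtain ⟨I, hIc, hIm, hImap⟩ := hcov ⟨i, hi'⟩
      obtain ⟨IA, IB, hIsplit, hIAmap, hIBmap, hAlt, hBgt⟩ := key I hIc hImap
      have hiIA : (⟨(i : ℕ), hi'⟩ : Fin S.length) ∈ IA := by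
        rw [hIsplit] at hIm
        rcases List.mem_append.1 hIm with h | h
        · exact h
        · rcases List.mem_cons.1 h with h | h
          · exfalso; have h2 : (i : ℕ) = m := congrArg Fin.val h; omega
          · exfalso; have h2 := hBgt _ h; simp at h2; omega
      refine ⟨List.pmap (fun (a : Fin S.length) (h : a.val < m) => (⟨a.val, h⟩ : Fin L.length))
        IA hAlt, ?_, ?_, ?_⟩
      · apply chainP.mpr
        exact ((chainP.mp hIc).sublist
          (by rw [hIsplit]; exact List.sublist_append_left _ _)).pmap hAlt
          (fun x hx y hy hxy => hxy)
      · rw [List.mem_pmap]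
        exact ⟨⟨i, hi'⟩, hiIA, rfl⟩
      · rw [mapeq IA hAlt, hIAmap]
  -- B is an s-cover of L
  have hcovB : IsSCover B L := by
    have hdownlt : ∀ (b : Fin S.length), m < b.val → b.val - (m + 1) < m := by
      intro b hb; have := b.isLt; omega
    have mapeq : ∀ (IB : List (Fin S.length)) (hBgt : ∀ b ∈ IB, m < b.val),
        (List.pmap (fun (b : Fin S.length) (h : m < b.val) =>
          (⟨b.val - (m + 1), hdownlt b h⟩ : Fin L.length)) IB hBgt).map L.get
          = IB.map S.get := by
      intro IB
      induction IB with
      | nil => intro _; rfl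
      | cons b IB ih =>
        intro hBgt
        have hh := hBgt b List.mem_cons_self
        simp only [List.pmap, List.map_cons]
        rw [ih (fun x hx => hBgt x (List.mem_cons_of_mem b hx))]
        congr 1
        exact (hget_gt b b.isLt hh).symm
    constructor
    · obtain ⟨IA, IB, hI0split, _, hIBmap, _, hBgt⟩ := key I0 hI0c hI0map
      rw [← hIBmap, ← mapeq IB hBgt]
      apply List.map_getElem_sublist
      refine (hpI0.sublist (by rw [hI0split]; exact
        (List.sublist_cons_self _ _).trans (List.sublist_append_right _ _))).pmap hBgt
        (fun x hx y hy hxy => ?_)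
      show x.val - (m + 1) < y.val - (m + 1)
      omega
    · intro i
      have hi' : m + 1 + (i : ℕ) < S.length := by have := i.isLt; omega
      obtain ⟨I, hIc, hIm, hImap⟩ := hcov ⟨m + 1 + (i : ℕ), hi'⟩
      obtain ⟨IA, IB, hIsplit, hIAmap, hIBmap, hAlt, hBgt⟩ := key I hIc hImap
      have hiIB : (⟨m + 1 + (i : ℕ), hi'⟩ : Fin S.length) ∈ IB := by
        rw [hIsplit] at hIm
        rcases List.mem_append.1 hIm with h | h
        · exfalso; have h2 := hAlt _ h; simp at h2; omega
        · rcases List.mem_cons.1 h with h | h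
          · exfalso; have h2 : m + 1 + (i : ℕ) = m := congrArg Fin.val h; omega
          · exact h
      refine ⟨List.pmap (fun (b : Fin S.length) (h : m < b.val) =>
          (⟨b.val - (m + 1), hdownlt b h⟩ : Fin L.length)) IB hBgt, ?_, ?_, ?_⟩
      · apply chainP.mpr
        refine ((chainP.mp hIc).sublist (by rw [hIsplit]; exact
          (List.sublist_cons_self _ _).trans (List.sublist_append_right _ _))).pmap hBgt
          (fun x hx y hy hxy => ?_)
        show x.val - (m + 1) < y.val - (m + 1)
        omega
      · rw [List.mem_pmap]
        refine ⟨⟨m + 1 + (i : ℕ), hi'⟩, hiIB, ?_⟩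
        apply Fin.ext
        show m + 1 + (i : ℕ) - (m + 1) = (i : ℕ)
        omega
      · rw [mapeq IB hBgt, hIBmap]
  have hA := ihL A hcovA
  have hB := ihL B hcovB
  have hlenC : C.length = A.length + 1 + B.length := by
    rw [hCsplit]; simp [List.length_append]; omega
  omega

theorem zimin_sprim_aux : ∀ n, SPrimitive (zimin n)
  | 0 => fun C _ => Nat.zero_le _
  | n + 1 => by
    have h : zimin (n + 1) = zimin n ++ (n + 1) :: zimin n := by
      simp [zimin]
    rw [h]
    exact sprim_step (not_mem_zimin (Nat.lt_succ_self n)) (zimin_sprim_aux n)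

theorem zimin_sPrimitive (k : ℕ) (hk : 1 ≤ k) : SPrimitive (zimin k) :=
  zimin_sprim_aux k
end

section
/- If S is a word of length n and C is an s-cover of S, then there exist positive integers r_0, r_1, ..., r_{n-1} such that the word S[0]^{r_0} S[1]^{r_1} ... S[n-1]^{r_{n-1}} belongs to the shuffle closure of C. -/
/-- `W` belongs to the shuffle closure of `C`: the positions of `W` can be
partitioned into disjoint strictly increasing subsequences, each spelling `C`. -/
def InShuffleClosure {α : Type*} (C W : List α) : Prop :=
  ∃ Is : List (List (Fin W.length)),
    (∀ I ∈ Is, I.Chain' (fun a b => (a : ℕ) < (b : ℕ)) ∧ I.map W.get = C) ∧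
    Is.flatten.Perm (List.finRange W.length)

namespace SCoverShuffle

lemma coeList {n : ℕ} (I : List (Fin n)) :
    (I : List ℕ) = I.map Fin.val := by
  induction I with
  | nil => rfl
  | cons a l ih => exact congrArg (List.cons (a : ℕ)) ih

lemma drop_finRange_eq {n : ℕ} (i : Fin n) :
    (List.finRange n).drop i.val = i :: (List.finRange n).drop (i.val + 1) := by
  rw [← List.getElem_cons_drop (as := List.finRange n) (i := i.val) (by simp [i.isLt])]
  congr 1
  simp [List.getElem_finRange]

lemma take_finRange_succ {n : ℕ} (i : Fin n) :
    (List.finRange n).take (i.val + 1) = (List.finRange n).take i.val ++ [i] := by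
  rw [List.take_add, drop_finRange_eq]
  simp

variable {α : Type*} (S : List α) (Occ : Fin S.length → List (Fin S.length))

/-- users of block `i`: indices `j` whose occurrence passes through `i`. -/
def U (i : Fin S.length) : List (Fin S.length) :=
  (List.finRange S.length).filter (fun j => decide (i ∈ Occ j))

lemma mem_U {i j : Fin S.length} : j ∈ U S Occ i ↔ i ∈ Occ j := by
  simp [U, List.mem_filter]

lemma nodup_U (i : Fin S.length) : (U S Occ i).Nodup :=
  (List.nodup_finRange _).filter _

/-- multiplicity of block `i`. -/
def rr (i : Fin S.length) : ℕ := (U S Occ i).length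

/-- the block of letter `i`. -/
def rep (i : Fin S.length) : List α := List.replicate (rr S Occ i) (S.get i)

/-- prefix sums of block lengths. -/
def off (m : ℕ) : ℕ := (((List.finRange S.length).take m).flatMap (rep S Occ)).length

def W : List α := (List.finRange S.length).flatMap (rep S Occ)

lemma off_mono {m m' : ℕ} (h : m ≤ m') : off S Occ m ≤ off S Occ m' := by
  have heq : (List.finRange S.length).take m' =
      (List.finRange S.length).take m ++ (((List.finRange S.length).drop m).take (m' - m)) := by
    rw [← List.take_add]
    congr 1
    omega
  simp only [off]
  rw [heq, List.flatMap_append, List.length_append]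
  exact Nat.le_add_right _ _

lemma off_succ (i : Fin S.length) : off S Occ (i.val + 1) = off S Occ i.val + rr S Occ i := by
  simp only [off]
  rw [take_finRange_succ, List.flatMap_append, List.length_append]
  simp [rep]

lemma W_eq (i : Fin S.length) :
    W S Occ = ((List.finRange S.length).take i.val).flatMap (rep S Occ) ++
      (rep S Occ i ++ ((List.finRange S.length).drop (i.val + 1)).flatMap (rep S Occ)) := by
  conv_lhs => rw [W, ← List.take_append_drop i.val (List.finRange S.length),
    drop_finRange_eq i]
  rw [List.flatMap_append, List.flatMap_cons]

lemma off_length : off S Occ S.length = (W S Occ).length := by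
  simp only [off, W]
  rw [List.take_of_length_le (by simp)]

lemma pos_lt {i : Fin S.length} {t : ℕ} (ht : t < rr S Occ i) :
    off S Occ i.val + t < (W S Occ).length := by
  have h1 : off S Occ i.val + t < off S Occ (i.val + 1) := by
    rw [off_succ]; omega
  have h2 : off S Occ (i.val + 1) ≤ off S Occ S.length := off_mono S Occ i.isLt
  rw [off_length] at h2; omega

lemma getElem_W {i : Fin S.length} {t : ℕ} (ht : t < rr S Occ i)
    (hlt : off S Occ i.val + t < (W S Occ).length) :
    (W S Occ)[off S Occ i.val + t] = S.get i := by
  have hA : (((List.finRange S.length).take i.val).flatMap (rep S Occ)).length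
      = off S Occ i.val := rfl
  rw [List.getElem_of_eq (W_eq S Occ i)]
  rw [List.getElem_append_right (by omega)]
  simp only [hA, Nat.add_sub_cancel_left]
  rw [List.getElem_append_left (by simpa [rep] using ht)]
  simp [rep]

lemma pos_inj {i i' : Fin S.length} {a a' : ℕ} (ha : a < rr S Occ i) (ha' : a' < rr S Occ i')
    (h : off S Occ i.val + a = off S Occ i'.val + a') : i = i' ∧ a = a' := by
  have key : ∀ p q : Fin S.length, p.val < q.val →
      ∀ b, b < rr S Occ p → off S Occ p.val + b < off S Occ q.val := by
    intro p q hpq b hb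
    have h1 : off S Occ p.val + b < off S Occ (p.val + 1) := by rw [off_succ]; omega
    have h2 : off S Occ (p.val + 1) ≤ off S Occ q.val := off_mono S Occ (by omega)
    omega
  rcases lt_trichotomy i.val i'.val with hlt | heq | hgt
  · exact absurd h (by have := key i i' hlt a ha; omega)
  · have : i = i' := Fin.ext heq
    subst this
    exact ⟨rfl, by omega⟩
  · exact absurd h (by have := key i' i hgt a' ha'; omega)

variable (hmem : ∀ i, i ∈ Occ i)

section

include hmem

lemma rr_pos (i : Fin S.length) : 0 < rr S Occ i := by
  rw [rr, List.length_pos_iff]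
  exact fun he => by simpa [he] using (mem_U S Occ).mpr (hmem i)

/-- the embedding of block positions: occurrence `j`, block `i`. -/
def g (j i : Fin S.length) : Fin (W S Occ).length :=
  ⟨off S Occ i.val + (U S Occ i).idxOf j % rr S Occ i,
    pos_lt S Occ (Nat.mod_lt _ (rr_pos S Occ hmem i))⟩

lemma get_g (j i : Fin S.length) : (W S Occ).get (g S Occ hmem j i) = S.get i := by
  exact getElem_W S Occ (Nat.mod_lt _ (rr_pos S Occ hmem i)) _

lemma g_mono {j i i' : Fin S.length} (h : (i : ℕ) < i') :
    (g S Occ hmem j i : ℕ) < g S Occ hmem j i' := by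
  show off S Occ i.val + _ < off S Occ i'.val + _
  have h1 : (U S Occ i).idxOf j % rr S Occ i < rr S Occ i :=
    Nat.mod_lt _ (rr_pos S Occ hmem i)
  have h2 : off S Occ i.val + (U S Occ i).idxOf j % rr S Occ i < off S Occ (i.val + 1) := by
    rw [off_succ]; omega
  have h3 : off S Occ (i.val + 1) ≤ off S Occ i'.val := off_mono S Occ (by omega)
  omega

lemma g_inj {j j' i i' : Fin S.length} (hj : i ∈ Occ j) (hj' : i' ∈ Occ j')
    (h : g S Occ hmem j i = g S Occ hmem j' i') : j = j' ∧ i = i' := by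
  have hval : off S Occ i.val + (U S Occ i).idxOf j % rr S Occ i =
      off S Occ i'.val + (U S Occ i').idxOf j' % rr S Occ i' := congrArg Fin.val h
  obtain ⟨hii, haa⟩ := pos_inj S Occ (Nat.mod_lt _ (rr_pos S Occ hmem i))
    (Nat.mod_lt _ (rr_pos S Occ hmem i')) hval
  subst hii
  have hjiL : (U S Occ i).idxOf j < (U S Occ i).length :=
    List.idxOf_lt_length_iff.mpr ((mem_U S Occ).mpr hj)
  have hjiL' : (U S Occ i).idxOf j' < (U S Occ i).length :=
    List.idxOf_lt_length_iff.mpr ((mem_U S Occ).mpr hj')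
  have hji : (U S Occ i).idxOf j < rr S Occ i := hjiL
  have hji' : (U S Occ i).idxOf j' < rr S Occ i := hjiL'
  rw [Nat.mod_eq_of_lt hji, Nat.mod_eq_of_lt hji'] at haa
  refine ⟨?_, rfl⟩
  have h1 : (U S Occ i).get ⟨_, hjiL⟩ = j := List.getElem_idxOf hjiL
  have h2 : (U S Occ i).get ⟨_, hjiL'⟩ = j' := List.getElem_idxOf hjiL'
  calc j = (U S Occ i).get ⟨_, hjiL⟩ := h1.symm
    _ = (U S Occ i).get ⟨_, hjiL'⟩ := congrArg _ (Fin.ext haa)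
    _ = j' := h2

end

end SCoverShuffle

open SCoverShuffle in
theorem scover_implies_shuffle {α : Type*} (C S : List α) (h : IsSCover C S) :
    ∃ r : Fin S.length → ℕ, (∀ i, 0 < r i) ∧
      InShuffleClosure C
        ((List.finRange S.length).flatMap fun i => List.replicate (r i) (S.get i)) := by
  classical
  obtain ⟨-, hocc⟩ := h
  choose Occ hchain hmem hmap using hocc
  have hchain' : ∀ j, ((Occ j).map Fin.val).Chain' (· < ·) := by
    intro j
    have hc : ((Occ j : List ℕ)).Chain' (· < ·) := hchain j
    rwa [coeList] at hc
  have hchain'' : ∀ j, (Occ j).Chain' (fun a b => a.val < b.val) := fun j =>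
    (List.isChain_map _).mp (hchain' j)
  have hnodup : ∀ j, (Occ j).Nodup := by
    intro j
    have hp : ((Occ j).map Fin.val).Pairwise (· < ·) :=
      List.isChain_iff_pairwise.mp (hchain' j)
    have hnd : ((Occ j).map Fin.val).Nodup := hp.imp fun h => Nat.ne_of_lt h
    exact hnd.of_map _
  refine ⟨rr S Occ, fun i => rr_pos S Occ hmem i, ?_⟩
  show InShuffleClosure C (W S Occ)
  refine ⟨(List.finRange S.length).map (fun j => (Occ j).map (g S Occ hmem j)), ?_, ?_⟩
  · intro I hI
    obtain ⟨j, -, rfl⟩ := List.mem_map.mp hI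
    constructor
    · show ((((Occ j).map (g S Occ hmem j) : List (Fin (W S Occ).length)) : List ℕ)).Chain' (· < ·)
      rw [coeList, List.map_map]; refine (List.isChain_map _).mpr ?_
      exact (hchain'' j).imp fun a b hab => g_mono S Occ hmem hab
    · rw [List.map_map]
      have : (W S Occ).get ∘ g S Occ hmem j = S.get := funext fun i => get_g S Occ hmem j i
      rw [this, hmap j]
  · -- flatten is a permutation of finRange
    have hnd : ((List.finRange S.length).map
        (fun j => (Occ j).map (g S Occ hmem j))).flatten.Nodup := by
      rw [List.nodup_flatten]
      constructor
      · intro l hl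
        obtain ⟨j, -, rfl⟩ := List.mem_map.mp hl
        refine (hnodup j).map_on ?_
        intro x hx y hy hxy
        exact ((g_inj S Occ hmem hx hy hxy).2)
      · rw [List.pairwise_map]
        refine ((List.nodup_finRange _).imp ?_)
        intro j j' hne x hx hx'
        obtain ⟨i, hi, rfl⟩ := List.mem_map.mp hx
        obtain ⟨i', hi', heq⟩ := List.mem_map.mp hx'
        exact hne ((g_inj S Occ hmem hi hi' heq.symm).1)
    have hlen : ((List.finRange S.length).map
        (fun j => (Occ j).map (g S Occ hmem j))).flatten.length = (W S Occ).length := by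
      rw [List.length_flatten, List.map_map]
      have h1 : ((List.finRange S.length).map
          (List.length ∘ fun j => (Occ j).map (g S Occ hmem j))).sum
          = ∑ j : Fin S.length, (Occ j).length := by
        rw [Fin.sum_univ_def]
        simp only [Function.comp_def, List.length_map]
      have h2 : (W S Occ).length = ∑ i : Fin S.length, rr S Occ i := by
        rw [W, List.length_flatMap, Fin.sum_univ_def]
        simp only [Function.comp_def, rep, List.length_replicate]
      rw [h1, h2]
      have h3 : ∀ i, rr S Occ i = (Finset.univ.filter (fun j => i ∈ Occ j)).card := by
        intro i
        rw [rr, ← List.toFinset_card_of_nodup (nodup_U S Occ i)]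
        congr 1
        ext j
        simp [U, List.mem_filter]
      have h4 : ∀ j, (Occ j).length = (Finset.univ.filter (fun i => i ∈ Occ j)).card := by
        intro j
        rw [← List.toFinset_card_of_nodup (hnodup j)]
        congr 1
        ext i
        simp
      calc ∑ j : Fin S.length, (Occ j).length
          = ∑ j : Fin S.length, ∑ i : Fin S.length, if i ∈ Occ j then 1 else 0 := by
            simp_rw [h4, Finset.card_filter]
        _ = ∑ i : Fin S.length, ∑ j : Fin S.length, if i ∈ Occ j then 1 else 0 :=
            Finset.sum_comm
        _ = ∑ i : Fin S.length, rr S Occ i := by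
            simp_rw [h3, Finset.card_filter]
    refine (hnd.subperm ?_).perm_of_length_le ?_
    · intro x _; exact List.mem_finRange x
    · rw [hlen, List.length_finRange]
end

section
/- If a factor of a word S is not s-primitive, then S is not s-primitive. Concretely: if S = P·U·Q and C is a non-trivial s-cover of U, then P·C·Q is a non-trivial s-cover of S. -/
/-!
Occurrences concatenate: an occurrence of `C` in `S` followed by a shifted occurrence of `D` in `T`
is an occurrence of `C ++ D` in `S ++ T`. Hence s-covers are compatible with concatenation, and
`P ++ C ++ Q` covers `P ++ U ++ Q` because every word covers itself.
-/

namespace List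

variable {α : Type*}

def embedLeft (S T : List α) (i : Fin S.length) : Fin (S ++ T).length :=
  Fin.cast length_append.symm (Fin.castAdd T.length i)

def embedRight (S T : List α) (j : Fin T.length) : Fin (S ++ T).length :=
  Fin.cast length_append.symm (Fin.natAdd S.length j)

@[simp]
theorem val_embedLeft (S T : List α) (i : Fin S.length) : (embedLeft S T i : ℕ) = i := rfl

@[simp]
theorem val_embedRight (S T : List α) (j : Fin T.length) :
    (embedRight S T j : ℕ) = S.length + j := rfl

@[simp]
theorem get_embedLeft (S T : List α) (i : Fin S.length) :
    (S ++ T).get (embedLeft S T i) = S.get i :=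
  getElem_append_left i.isLt

@[simp]
theorem get_embedRight (S T : List α) (j : Fin T.length) :
    (S ++ T).get (embedRight S T j) = T.get j := by
  simp [embedRight, getElem_append_right]

end List

open List

def IsOccurrence {α : Type*} (C S : List α) (I : List (Fin S.length)) : Prop :=
  I.IsChain (· < ·) ∧ I.map S.get = C

-- In `IsSCover` the list of positions is coerced to `List ℕ` through the list monad.
set_option linter.deprecated false in
theorem isSCover_iff {α : Type*} {C S : List α} :
    IsSCover C S ↔ C.Sublist S ∧ ∀ i, ∃ I, IsOccurrence C S I ∧ i ∈ I := by
  simp only [IsSCover, IsOccurrence, Chain', bind_pure_comp, map_eq_map, isChain_map]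
  exact and_congr_right fun _ => forall_congr' fun _ => exists_congr fun _ => by tauto

theorem IsOccurrence.append {α : Type*} {C D S T : List α} {I : List (Fin S.length)}
    {J : List (Fin T.length)} (hI : IsOccurrence C S I) (hJ : IsOccurrence D T J) :
    IsOccurrence (C ++ D) (S ++ T) (I.map (embedLeft S T) ++ J.map (embedRight S T)) := by
  refine ⟨isChain_append.2 ⟨(isChain_map _).2 hI.1, (isChain_map _).2 ?_, ?_⟩, ?_⟩
  · exact hJ.1.imp fun _ _ h => Nat.add_lt_add_left h _
  · simp only [getLast?_map, head?_map, Option.mem_def, Option.map_eq_some_iff]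
    rintro _ ⟨i, -, rfl⟩ _ ⟨j, -, rfl⟩
    simp only [Fin.lt_def, val_embedLeft, val_embedRight]
    omega
  · rw [map_append, map_map, map_map, ← hI.2, ← hJ.2]
    congr 2 <;> funext i <;> simp

theorem IsSCover.exists_isOccurrence {α : Type*} {C S : List α} (hC : IsSCover C S) :
    ∃ I, IsOccurrence C S I := by
  rw [isSCover_iff] at hC
  rcases S.length.eq_zero_or_pos with hS | hS
  · have : C = [] := sublist_nil.1 (length_eq_zero_iff.1 hS ▸ hC.1)
    exact ⟨[], isChain_nil, by simp [this]⟩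
  · obtain ⟨I, hI, -⟩ := hC.2 ⟨0, hS⟩
    exact ⟨I, hI⟩

theorem isSCover_self {α : Type*} (S : List α) : IsSCover S S :=
  isSCover_iff.2 ⟨Sublist.refl S, fun i => ⟨finRange S.length,
    ⟨(pairwise_lt_finRange _).isChain, map_get_finRange S⟩, mem_finRange i⟩⟩

theorem IsSCover.append {α : Type*} {C D S T : List α} (hC : IsSCover C S) (hD : IsSCover D T) :
    IsSCover (C ++ D) (S ++ T) := by
  obtain ⟨I₀, hI₀⟩ := hC.exists_isOccurrence
  obtain ⟨J₀, hJ₀⟩ := hD.exists_isOccurrence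
  rw [isSCover_iff] at hC hD ⊢
  refine ⟨hC.1.append hD.1, fun k => ?_⟩
  by_cases hk : (k : ℕ) < S.length
  · obtain ⟨I, hI, hkI⟩ := hC.2 ⟨k, hk⟩
    exact ⟨_, hI.append hJ₀, mem_append_left _ (mem_map_of_mem hkI)⟩
  · have hkT : (k : ℕ) - S.length < T.length := by
      have := k.isLt
      simp only [length_append] at this
      omega
    obtain ⟨J, hJ, hkJ⟩ := hD.2 ⟨k - S.length, hkT⟩
    refine ⟨_, hI₀.append hJ, mem_append_right _ ?_⟩
    convert mem_map_of_mem hkJ using 1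
    ext
    simp only [val_embedRight]
    omega

theorem scover_of_factor_scover {α : Type*} (P U Q C S : List α)
    (hS : S = P ++ U ++ Q) (hC : IsSCover C U) (hlt : C.length < U.length) :
    IsSCover (P ++ C ++ Q) S ∧ (P ++ C ++ Q).length < S.length ∧ ¬ SPrimitive S := by
  subst hS
  have hcover : IsSCover (P ++ C ++ Q) (P ++ U ++ Q) :=
    ((isSCover_self P).append hC).append (isSCover_self Q)
  have hshorter : (P ++ C ++ Q).length < (P ++ U ++ Q).length := by
    simp only [length_append]
    omega
  exact ⟨hcover, hshorter, fun hprim => (hprim _ hcover).not_gt hshorter⟩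
end

section
/- If U and V are words with Alph(V) ⊆ Alph(U) (every letter of V occurs in U), then U is an s-cover of the word U·V·U. -/
/-- Helper: an occurrence of `U` in `S` given by a strictly monotone
position function. -/
lemma scover_occ {α : Type*} (U S : List α) (f : Fin U.length → Fin S.length)
    (hmono : ∀ a b : Fin U.length, (a : ℕ) < b → (f a : ℕ) < f b)
    (hval : ∀ k : Fin U.length, S.get (f k) = U.get k) :
    ∃ I : List (Fin S.length),
      I.Chain' (fun a b => (a : ℕ) < (b : ℕ)) ∧
      (∀ k : Fin U.length, f k ∈ I) ∧ I.map S.get = U := by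
  refine ⟨(List.finRange U.length).map f, ?_, ?_, ?_⟩
  · have key : ∀ l : List (Fin S.length),
        (l.flatMap fun (a : Fin S.length) => [(a : ℕ)]) = l.map Fin.val := by
      intro l; induction l with
      | nil => rfl
      | cons x xs ih => rw [List.flatMap_cons, List.map_cons, ih]; rfl
    simp only [List.pure_def, List.bind_eq_flatMap]
    rw [key, List.map_map]
    unfold List.Chain'
    rw [List.isChain_map]
    exact ((List.pairwise_lt_finRange U.length).imp
      (fun {a b} hab => hmono a b hab)).isChain
  · intro k
    exact List.mem_map_of_mem (f := f) (List.mem_finRange k)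
  · rw [List.map_map]
    have : S.get ∘ f = U.get := funext hval
    rw [this, List.map_get_finRange]

theorem scover_gapped_repeat {α : Type*} (U V : List α)
    (h : ∀ a ∈ V, a ∈ U) : IsSCover U (U ++ V ++ U) := by
  set S := U ++ V ++ U with hS
  have hlen : S.length = U.length + V.length + U.length := by
    simp [hS]; omega
  constructor
  · rw [hS, List.append_assoc]
    exact List.sublist_append_left U (V ++ U)
  intro i
  set n := U.length with hn
  set m := V.length with hm
  have hget1 : ∀ (k : ℕ) (hk : k < n) (hk' : k < S.length),
      S.get ⟨k, hk'⟩ = U.get ⟨k, hk⟩ := by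
    intro k hk hk'
    simp only [List.get_eq_getElem, hS]
    rw [List.getElem_append_left (by simp [hn, hm] <;> omega),
        List.getElem_append_left hk]
  have hget3 : ∀ (k : ℕ) (hk : k < n) (hk' : n + m + k < S.length),
      S.get ⟨n + m + k, hk'⟩ = U.get ⟨k, hk⟩ := by
    intro k hk hk'
    simp only [List.get_eq_getElem, hS]
    have hle : (U ++ V).length ≤ n + m + k := by simp [hn, hm] <;> omega
    rw [List.getElem_append_right hle]
    congr 1
    simp [hn, hm] <;> omega
  rcases lt_or_ge (i : ℕ) n with hi | hi
  · -- first copy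
    obtain ⟨I, hc, hmem, hmap⟩ := scover_occ U S
      (fun k => ⟨k, by omega⟩) (fun a b hab => hab)
      (fun k => hget1 k k.2 (by omega))
    exact ⟨I, hc, by simpa using hmem ⟨i, hi⟩, hmap⟩
  rcases le_or_gt (n + m) (i : ℕ) with hi2 | hi2
  · -- last copy
    have hiL : (i : ℕ) < S.length := i.2
    obtain ⟨I, hc, hmem, hmap⟩ := scover_occ U S
      (fun k => ⟨n + m + k, by omega⟩) (fun a b hab => by simpa using hab)
      (fun k => hget3 k k.2 (by omega))
    refine ⟨I, hc, ?_, hmap⟩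
    have := hmem ⟨(i : ℕ) - (n + m), by omega⟩
    simpa [Fin.ext_iff, Nat.add_sub_cancel' hi2] using this
  · -- middle: position in V
    have hiv : (i : ℕ) - n < m := by omega
    have haV : V.get ⟨(i : ℕ) - n, hiv⟩ ∈ U := h _ (V.get_mem _)
    obtain ⟨j, hjval⟩ := List.mem_iff_get.mp haV
    have hj : (j : ℕ) < n := j.2
    have hgeti : S.get i = U.get j := by
      simp only [List.get_eq_getElem, hS]
      rw [List.getElem_append_left (by simp [hn, hm] <;> omega),
          List.getElem_append_right (by simpa [hn] using hi)]
      simp only [List.get_eq_getElem] at hjval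
      rw [hjval]
    obtain ⟨I, hc, hmem, hmap⟩ := scover_occ U S
      (fun k => if (k : ℕ) < (j : ℕ) then ⟨k, by omega⟩
        else if (k : ℕ) = (j : ℕ) then i else ⟨n + m + (k : ℕ), by omega⟩)
      (fun a b hab => by
        by_cases h1 : (a : ℕ) < (j : ℕ)
        · rw [if_pos h1]
          by_cases h2 : (b : ℕ) < (j : ℕ)
          · rw [if_pos h2]; exact hab
          · by_cases h3 : (b : ℕ) = (j : ℕ)
            · rw [if_neg h2, if_pos h3]
              show (a : ℕ) < (i : ℕ); omega
            · rw [if_neg h2, if_neg h3]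
              show (a : ℕ) < n + m + (b : ℕ); omega
        · by_cases h3 : (a : ℕ) = (j : ℕ)
          · rw [if_neg h1, if_pos h3,
              if_neg (by omega : ¬ (b : ℕ) < (j : ℕ)),
              if_neg (by omega : ¬ (b : ℕ) = (j : ℕ))]
            show (i : ℕ) < n + m + (b : ℕ); omega
          · rw [if_neg h1, if_neg h3,
              if_neg (by omega : ¬ (b : ℕ) < (j : ℕ)),
              if_neg (by omega : ¬ (b : ℕ) = (j : ℕ))]
            show n + m + (a : ℕ) < n + m + (b : ℕ); omega)
      (fun k => by
        by_cases h1 : (k : ℕ) < (j : ℕ)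
        · rw [if_pos h1]
          exact hget1 k (by omega) (by omega)
        · by_cases h3 : (k : ℕ) = (j : ℕ)
          · rw [if_neg h1, if_pos h3, hgeti]
            congr 1
            exact Fin.ext h3.symm
          · rw [if_neg h1, if_neg h3]
            exact hget3 k k.2 (by omega))
    refine ⟨I, hc, ?_, hmap⟩
    have := hmem j
    simpa using this
end

section
/- If C is an s-cover of S and C' is an s-cover of C, then C' is an s-cover of S. -/
theorem scover_trans {α : Type*} (C' C S : List α)
    (h1 : IsSCover C S) (h2 : IsSCover C' C) : IsSCover C' S := by
  obtain ⟨hsub1, hcov1⟩ := h1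
  obtain ⟨hsub2, hcov2⟩ := h2
  refine ⟨hsub2.trans hsub1, ?_⟩
  intro i
  obtain ⟨I, hIc, hiI, hImap⟩ := hcov1 i
  have hlen : I.length = C.length := by rw [← hImap, List.length_map]
  obtain ⟨j, hj⟩ := List.mem_iff_get.mp hiI
  obtain ⟨J, hJc, hjJ, hJmap⟩ := hcov2 (j.cast hlen)
  have hIc' : (I.map Fin.val).Chain' (· < ·) := by
    rw [← List.flatMap_pure_eq_map]; exact hIc
  have hJc' : (J.map Fin.val).Chain' (· < ·) := by
    rw [← List.flatMap_pure_eq_map]; exact hJc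
  have hJcfin : J.Chain' (fun a b => a.val < b.val) := (List.isChain_map Fin.val).mp hJc'
  have hpI : I.Pairwise (fun x y : Fin S.length => (x : ℕ) < (y : ℕ)) :=
    List.pairwise_map.mp (List.isChain_iff_pairwise.mp hIc')
  have hmono : ∀ a b : Fin C.length, (a : ℕ) < (b : ℕ) →
      ((I.get (a.cast hlen.symm) : Fin S.length) : ℕ) < (I.get (b.cast hlen.symm) : ℕ) :=
    fun a b hab => List.pairwise_iff_get.mp hpI (a.cast hlen.symm) (b.cast hlen.symm) hab
  refine ⟨J.map (fun k => I.get (k.cast hlen.symm)), ?_, ?_, ?_⟩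
  · show List.Chain' _ (List.flatMap (pure ∘ Fin.val) _)
    rw [List.flatMap_pure_eq_map, List.map_map]
    exact (List.isChain_map _).2 (hJcfin.imp (fun a b hab => hmono a b hab))
  · have : i = I.get ((j.cast hlen).cast hlen.symm) := by simpa using hj.symm
    rw [this]
    exact List.mem_map_of_mem hjJ
  · rw [List.map_map, ← hJmap]
    apply List.map_congr_left
    intro k hk
    simp only [Function.comp_apply]
    have : C.get k = (I.map S.get).get (k.cast (by rw [hImap])) := by simp [hImap]
    rw [this, List.get_eq_getElem (l := List.map _ _), List.getElem_map]
    rfl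
end

section
/- Let S be a word, F the word listing the letters of Alph(S) in order of first occurrence in S, and L the word listing the letters of Alph(S) in order of last occurrence in S. If FLFL is a subsequence of S, then FL is an s-cover of S. -/
/-- The letters of `S` in order of first occurrence. -/
def firstWord {α : Type*} [DecidableEq α] (S : List α) : List α :=
  S.foldl (fun acc c => if c ∈ acc then acc else acc ++ [c]) []

/-- The letters of `S` in order of last occurrence. -/
def lastWord {α : Type*} [DecidableEq α] (S : List α) : List α :=
  (firstWord S.reverse).reverse

namespace SCoverAux

variable {α : Type*} [DecidableEq α]

def fw : List α → List α
  | [] => []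
  | a :: s => a :: (fw s).filter (· ≠ a)

@[simp] lemma fw_nil : fw ([] : List α) = [] := rfl

lemma foldl_fw (S : List α) : ∀ acc : List α,
    S.foldl (fun acc c => if c ∈ acc then acc else acc ++ [c]) acc
      = acc ++ (fw S).filter (fun x => x ∉ acc) := by
  induction S with
  | nil => intro acc; simp
  | cons a s ih =>
    intro acc
    simp only [List.foldl_cons, fw]
    by_cases ha : a ∈ acc
    · rw [if_pos ha, ih acc]
      congr 1
      rw [List.filter_cons_of_neg (by simp [ha]), List.filter_filter]
      apply List.filter_congr
      intro x hx
      by_cases hxc : x ∈ acc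
      · simp [hxc]
      · have hxa : x ≠ a := fun hh => hxc (hh ▸ ha)
        simp [hxc, hxa]
    · rw [if_neg ha, ih (acc ++ [a])]
      rw [List.filter_cons_of_pos (by simp [ha]), List.append_assoc, List.singleton_append]
      congr 2
      rw [List.filter_filter]
      apply List.filter_congr
      intro x hx
      by_cases hxa : x = a
      · subst hxa; simp
      · by_cases hxc : x ∈ acc <;> simp [hxa, hxc, List.mem_append]

lemma firstWord_eq_fw (S : List α) : firstWord S = fw S := by
  rw [firstWord, foldl_fw S []]
  simp

lemma mem_fw {S : List α} {c : α} : c ∈ fw S ↔ c ∈ S := by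
  induction S with
  | nil => simp [fw]
  | cons a s ih =>
    simp only [fw, List.mem_cons, List.mem_filter, ih]
    by_cases h : c = a <;> simp [h]

lemma indexOf_get_le : ∀ (S : List α) (i : ℕ) (h : i < S.length),
    S.idxOf (S.get ⟨i, h⟩) ≤ i := by
  intro S
  induction S with
  | nil => intro i h; simp at h
  | cons a s ih =>
    intro i h
    cases i with
    | zero => simp [List.idxOf_cons_self]
    | succ n =>
      simp only [List.get_cons_succ]
      by_cases hc : s.get ⟨n, by simpa using h⟩ = a
      · rw [hc, List.idxOf_cons_self]; omega
      · rw [List.idxOf_cons_ne _ (Ne.symm hc)]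
        have := ih n (by simpa using h)
        omega

lemma fw_split : ∀ (S : List α) {F₁ F₂ : List α} {c : α},
    (F₁ ++ c :: F₂).Sublist (fw S) → F₁.Sublist (S.take (S.idxOf c)) := by
  intro S
  induction S with
  | nil =>
    intro F₁ F₂ c h
    simp only [fw, List.sublist_nil, List.append_eq_nil_iff] at h
    exact absurd h.2 (by simp)
  | cons a s ih =>
    intro F₁ F₂ c h
    simp only [fw] at h
    have hmemc : ∀ {G : List α}, (F₁ ++ c :: F₂).Sublist G → c ∈ G := fun hG =>
      hG.subset (by simp)
    rcases List.sublist_cons_iff.mp h with h' | ⟨r, hr, hrs⟩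
    · -- F₁ ++ c :: F₂ <+ filter
      have hca : c ≠ a := by
        have := hmemc h'
        simp only [List.mem_filter, decide_eq_true_eq] at this
        exact this.2
      have h'' : (F₁ ++ c :: F₂).Sublist (fw s) := h'.trans List.filter_sublist
      have := ih h''
      rw [List.idxOf_cons_ne _ (Ne.symm hca), Nat.succ_eq_add_one, List.take_succ_cons]
      exact this.trans (List.sublist_cons_self a _)
    · cases F₁ with
      | nil => exact List.nil_sublist _
      | cons b F₁' =>
        simp only [List.cons_append] at hr
        injection hr with hb hre
        subst hb
        subst hre
        have hca : c ≠ b := by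
          have hcm : c ∈ (fw s).filter (· ≠ b) :=
            hrs.subset (List.mem_append_right F₁' List.mem_cons_self)
          simp only [List.mem_filter, decide_eq_true_eq] at hcm
          exact hcm.2
        have h'' : (F₁' ++ c :: F₂).Sublist (fw s) := hrs.trans List.filter_sublist
        have := ih h''
        rw [List.idxOf_cons_ne _ (Ne.symm hca), Nat.succ_eq_add_one, List.take_succ_cons]
        exact this.cons₂ b

lemma take_sub_take {S : List α} {m n : ℕ} (h : m ≤ n) :
    (S.take m).Sublist (S.take n) := by
  have : S.take m = (S.take n).take m := by
    rw [List.take_take, Nat.min_eq_left h]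
  rw [this]
  exact List.take_sublist _ _

lemma drop_sub_drop {S : List α} {m n : ℕ} (h : n ≤ m) :
    (S.drop m).Sublist (S.drop n) := by
  have : S.drop m = (S.drop n).drop (m - n) := by
    rw [List.drop_drop, Nat.add_sub_cancel' h]
  rw [this]
  exact List.drop_sublist _ _

/-- split at the position matched with the middle `c`. -/
lemma sublist_split {A B S : List α} {c : α} (h : (A ++ c :: B).Sublist S) :
    ∃ p : ℕ, ∃ hp : p < S.length, S.get ⟨p, hp⟩ = c ∧
      A.Sublist (S.take p) ∧ B.Sublist (S.drop (p + 1)) := by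
  obtain ⟨U, V, hUV, hAU, hcBV⟩ := List.append_sublist_iff.mp h
  obtain ⟨V₁, V₂, hV, hcV₁, hBV₂⟩ := List.cons_sublist_iff.mp hcBV
  obtain ⟨x, y, hxy⟩ := List.append_of_mem hcV₁
  subst hxy; subst hV; subst hUV
  set P := U ++ x with hP
  have hS : U ++ (x ++ c :: y ++ V₂) = P ++ c :: (y ++ V₂) := by
    simp [hP, List.append_assoc]
  rw [hS]
  refine ⟨P.length, by simp, ?_, ?_, ?_⟩
  · have : P.length < (P ++ c :: (y ++ V₂)).length := by simp
    show (P ++ c :: (y ++ V₂)).get ⟨P.length, _⟩ = c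
    rw [List.get_eq_getElem, List.getElem_append_right (le_refl _)]
    simp
  · rw [List.take_left]
    exact hAU.trans (List.sublist_append_left _ _)
  · have : (P ++ c :: (y ++ V₂)).drop (P.length + 1) = y ++ V₂ := by
      rw [show P.length + 1 = (P ++ [c]).length by simp,
        show P ++ c :: (y ++ V₂) = (P ++ [c]) ++ (y ++ V₂) by simp, List.drop_left]
    rw [this]
    exact hBV₂.trans (List.sublist_append_right _ _)

/-- assemble an occurrence through position `i`. -/
lemma occ {S A B : List α} (i : Fin S.length)
    (hA : A.Sublist (S.take (i : ℕ))) (hB : B.Sublist (S.drop ((i : ℕ) + 1))) :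
    ∃ I : List (Fin S.length),
      I.Chain' (fun a b => (a : ℕ) < (b : ℕ)) ∧ i ∈ I ∧
        I.map S.get = A ++ S.get i :: B := by
  obtain ⟨isA, hmapA, hpwA⟩ := List.sublist_eq_map_getElem hA
  obtain ⟨isB, hmapB, hpwB⟩ := List.sublist_eq_map_getElem hB
  have hA' : ∀ k : Fin (S.take (i : ℕ)).length, (k : ℕ) < S.length := fun k => by
    have h2 : (k : ℕ) < min (i : ℕ) S.length := by simpa using k.2
    omega
  have hAi : ∀ k : Fin (S.take (i : ℕ)).length, (k : ℕ) < (i : ℕ) := fun k => by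
    have h2 : (k : ℕ) < min (i : ℕ) S.length := by simpa using k.2
    omega
  have hB' : ∀ k : Fin (S.drop ((i : ℕ) + 1)).length, (i : ℕ) + 1 + (k : ℕ) < S.length :=
    fun k => by
      have h2 : (k : ℕ) < S.length - ((i : ℕ) + 1) := by simpa using k.2
      omega
  let fA : Fin (S.take (i : ℕ)).length → Fin S.length := fun k => ⟨(k : ℕ), hA' k⟩
  let fB : Fin (S.drop ((i : ℕ) + 1)).length → Fin S.length :=
    fun k => ⟨(i : ℕ) + 1 + (k : ℕ), hB' k⟩
  refine ⟨isA.map fA ++ i :: isB.map fB, ?_, ?_, ?_⟩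
  · haveI : IsTrans (Fin S.length) (fun a b => (a : ℕ) < (b : ℕ)) :=
      ⟨fun _ _ _ h1 h2 => Nat.lt_trans h1 h2⟩
    have hpw : List.Pairwise (fun a b : Fin S.length => (a : ℕ) < (b : ℕ))
        (isA.map fA ++ i :: isB.map fB) := by
      rw [List.pairwise_append]
      refine ⟨?_, ?_, ?_⟩
      · exact hpwA.map fA (fun a b hab => hab)
      · rw [List.pairwise_cons]
        constructor
        · intro b hb
          obtain ⟨k, _, rfl⟩ := List.mem_map.mp hb
          show (i : ℕ) < (i : ℕ) + 1 + (k : ℕ); omega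
        · exact hpwB.map fB (fun a b hab => by
            show (i : ℕ) + 1 + (a : ℕ) < (i : ℕ) + 1 + (b : ℕ)
            have : (a : ℕ) < (b : ℕ) := hab
            omega)
      · intro a ha b hb
        obtain ⟨k, _, rfl⟩ := List.mem_map.mp ha
        have hki : (k : ℕ) < (i : ℕ) := hAi k
        rcases List.mem_cons.mp hb with rfl | hb'
        · exact hki
        · obtain ⟨k', _, rfl⟩ := List.mem_map.mp hb'
          show (k : ℕ) < (i : ℕ) + 1 + (k' : ℕ); omega
    have hpw2 : List.Pairwise (fun a b : ℕ => a < b)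
        ((isA.map fA ++ i :: isB.map fB).map (fun x : Fin S.length => (x : ℕ))) :=
      hpw.map _ (fun _ _ hh => hh)
    simpa [← List.map_eq_flatMap, List.Chain'] using hpw2.isChain
  · simp
  · rw [List.map_append, List.map_cons, List.map_map, List.map_map, hmapA, hmapB]
    congr 1
    · refine List.map_congr_left fun k _ => ?_
      show S.get (fA k) = (S.take (i : ℕ)).get k
      simp [fA, List.getElem_take]
    · congr 1
      refine List.map_congr_left fun k _ => ?_
      show S.get (fB k) = (S.drop ((i : ℕ) + 1)).get k
      simp [fB, List.getElem_drop]

lemma lw_split {S L₁ L₂ : List α} {c : α}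
    (h : (L₁ ++ c :: L₂).Sublist (lastWord S)) (i : ℕ) (hi : i < S.length)
    (hc : S.get ⟨i, hi⟩ = c) : L₂.Sublist (S.drop (i + 1)) := by
  have hrev : (L₂.reverse ++ c :: L₁.reverse).Sublist (fw S.reverse) := by
    have := h.reverse
    rw [lastWord, firstWord_eq_fw, List.reverse_reverse] at this
    simpa [List.reverse_append] using this
  have hkey := fw_split S.reverse hrev
  -- index of c in S.reverse
  have hi' : S.length - 1 - i < S.reverse.length := by simp; omega
  have hgr : S.reverse.get ⟨S.length - 1 - i, hi'⟩ = c := by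
    rw [List.get_eq_getElem, List.getElem_reverse]
    have : S.length - 1 - (S.length - 1 - i) = i := by omega
    simp_rw [this]
    exact hc
  have hle : S.reverse.idxOf c ≤ S.length - 1 - i := by
    have := indexOf_get_le S.reverse (S.length - 1 - i) hi'
    rw [hgr] at this
    exact this
  have h2 : L₂.reverse.Sublist (S.reverse.take (S.length - 1 - i)) :=
    hkey.trans (take_sub_take hle)
  have h3 : (S.drop (i + 1)).reverse = S.reverse.take (S.length - 1 - i) := by
    rw [List.reverse_drop]
    congr 1
    omega
  rw [← h3] at h2
  exact List.reverse_sublist.mp h2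

end SCoverAux

open SCoverAux in
theorem FL_scover {α : Type*} [DecidableEq α] (S : List α)
    (h : (firstWord S ++ lastWord S ++ firstWord S ++ lastWord S).Sublist S) :
    IsSCover (firstWord S ++ lastWord S) S := by
  set F := firstWord S with hFdef
  set L := lastWord S with hLdef
  have hsub : ((F ++ L) ++ (F ++ L)).Sublist S := by
    simpa [List.append_assoc] using h
  constructor
  · exact (List.sublist_append_left _ _).trans hsub
  · intro i
    set c := S.get i with hcdef
    have hcS : c ∈ S := S.get_mem _
    have hcF : c ∈ F := by
      rw [hFdef, firstWord_eq_fw]; exact mem_fw.mpr hcS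
    have hcL : c ∈ L := by
      rw [hLdef, lastWord, firstWord_eq_fw, List.mem_reverse]
      exact mem_fw.mpr (List.mem_reverse.mpr hcS)
    obtain ⟨F₁, F₂, hF⟩ := List.append_of_mem hcF
    obtain ⟨L₁, L₂, hL⟩ := List.append_of_mem hcL
    have h2 : ((F ++ L₁) ++ c :: (L₂ ++ F ++ L)).Sublist S := by
      have heq : (F ++ L ++ F ++ L) = (F ++ L₁) ++ c :: (L₂ ++ F ++ L) := by
        rw [hL]; simp [List.append_assoc]
      rw [← heq]
      exact h
    obtain ⟨p, hp, hpc, hA, hB⟩ := sublist_split h2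
    by_cases hip : (i : ℕ) ≤ p
    · -- use i as the c in the F-part
      have hF₂L : (F₂ ++ L).Sublist (S.drop ((i : ℕ) + 1)) := by
        have hsuf : (F₂ ++ L).Sublist (L₂ ++ F ++ L) := by
          have : L₂ ++ F ++ L = (L₂ ++ F₁ ++ [c]) ++ (F₂ ++ L) := by
            rw [hF]; simp [List.append_assoc]
          rw [this]
          exact List.sublist_append_right _ _
        exact (hsuf.trans hB).trans (drop_sub_drop (by omega))
      have hF₁ : F₁.Sublist (S.take (i : ℕ)) := by
        have hsplit : (F₁ ++ c :: F₂).Sublist (fw S) := by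
          rw [← hF, ← firstWord_eq_fw, ← hFdef]
        have hkey := fw_split S hsplit
        have hle : S.idxOf c ≤ (i : ℕ) := by
          have := indexOf_get_le S (i : ℕ) i.2
          rw [show S.get ⟨(i : ℕ), i.2⟩ = c from by rw [hcdef]] at this
          exact this
        exact hkey.trans (take_sub_take hle)
      obtain ⟨I, hI1, hI2, hI3⟩ := occ i hF₁ hF₂L
      refine ⟨I, hI1, hI2, ?_⟩
      rw [hI3, ← hcdef]
      rw [hF]
      simp [List.append_assoc]
    · -- use i as the c in the L-part
      have hFL₁ : (F ++ L₁).Sublist (S.take (i : ℕ)) :=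
        hA.trans (take_sub_take (by omega))
      have hL₂ : L₂.Sublist (S.drop ((i : ℕ) + 1)) := by
        have hsplit : (L₁ ++ c :: L₂).Sublist (lastWord S) := by
          rw [← hL, ← hLdef]
        exact lw_split hsplit (i : ℕ) i.2 (by rw [hcdef])
      obtain ⟨I, hI1, hI2, hI3⟩ := occ i hFL₁ hL₂
      refine ⟨I, hI1, hI2, ?_⟩
      rw [hI3, ← hcdef, hL]
      simp [List.append_assoc]
end

section
/- The maximum length of an s-primitive binary word is 3; i.e., γ(2) = 3, with aba being s-primitive and every binary word of length ≥ 4 having a non-trivial s-cover. -/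
/-- `γ k` is the maximum length of an s-primitive word over an alphabet of size `k`
(words over `ℕ` using at most `k` distinct letters). -/
def GammaSpec (γ : ℕ → ℕ) : Prop :=
  ∀ k : ℕ,
    IsGreatest {n : ℕ | ∃ S : List ℕ, S.toFinset.card ≤ k ∧ SPrimitive S ∧ S.length = n} (γ k)

open List

section Aux

lemma range'_spell (S : List ℕ) (s l : ℕ) (h : s + l ≤ S.length) :
    (List.range' s l).map (fun t => S.getD t 0) = (S.drop s).take l := by
  induction l generalizing s with
  | zero => simp
  | succ l ih =>
    have hs : s < S.length := by omega
    rw [List.range'_succ]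
    simp only [List.map_cons]
    rw [ih (s+1) (by omega), List.drop_eq_getElem_cons hs, List.take_succ_cons,
      List.getD_eq_getElem _ _ hs]

/-- occurrence list of positions built from a list of natural indices -/
def occ (S : List ℕ) (L : List ℕ) (h : ∀ t ∈ L, t < S.length) : List (Fin S.length) :=
  L.pmap (fun t ht => ⟨t, ht⟩) h

lemma occ_map_val (S : List ℕ) (L : List ℕ) (h : ∀ t ∈ L, t < S.length) :
    (occ S L h).map Fin.val = L := by
  simp [occ, List.map_pmap]

lemma occ_chain' (S : List ℕ) (L : List ℕ) (h : ∀ t ∈ L, t < S.length)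
    (hL : L.Pairwise (· < ·)) :
    List.Chain' (fun a b : ℕ => a < b) ((occ S L h).map Fin.val) := by
  rw [occ_map_val]; exact hL.isChain

lemma occ_mem (S : List ℕ) (L : List ℕ) (h : ∀ t ∈ L, t < S.length)
    (i : Fin S.length) (hi : (i : ℕ) ∈ L) : i ∈ occ S L h := by
  rw [occ, List.mem_pmap]
  exact ⟨i, hi, rfl⟩

lemma occ_spell (S : List ℕ) (L : List ℕ) (h : ∀ t ∈ L, t < S.length) :
    (occ S L h).map S.get = L.map (fun t => S.getD t 0) := by
  rw [occ, List.map_pmap]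
  induction L with
  | nil => rfl
  | cons a tl ih =>
    simp only [List.pmap, List.map_cons]
    rw [ih]
    congr 1
    rw [List.get_eq_getElem, List.getD_eq_getElem _ _ (h a (by simp))]

/-- Deleting one copy of a square yields an s-cover. -/
lemma scover_square (P w Q : List ℕ) (hw : w ≠ []) :
    IsSCover (P ++ w ++ Q) (P ++ w ++ w ++ Q) := by
  set S : List ℕ := P ++ w ++ w ++ Q with hS
  have hm : 0 < w.length := List.length_pos_iff.mpr hw
  have hn : S.length = P.length + w.length + w.length + Q.length := by
    simp [hS]; omega
  have htake1 : S.take (P.length + w.length) = P ++ w := by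
    rw [hS, show P ++ w ++ w ++ Q = (P ++ w) ++ (w ++ Q) by simp,
      List.take_left' (by simp)]
  have hdrop1 : S.drop (P.length + 2 * w.length) = Q := by
    rw [hS, show P ++ w ++ w ++ Q = (P ++ w ++ w) ++ Q by simp,
      List.drop_left' (by simp; omega)]
  have htake2 : S.take P.length = P := by
    rw [hS, show P ++ w ++ w ++ Q = P ++ (w ++ w ++ Q) by simp,
      List.take_left' rfl]
  have hdrop2 : S.drop (P.length + w.length) = w ++ Q := by
    rw [hS, show P ++ w ++ w ++ Q = (P ++ w) ++ (w ++ Q) by simp,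
      List.drop_left' (by simp)]
  constructor
  · rw [hS, show P ++ w ++ w ++ Q = (P ++ w) ++ (w ++ Q) by simp,
      show P ++ w ++ Q = (P ++ w) ++ Q by simp]
    exact (List.Sublist.refl (P ++ w)).append (List.sublist_append_right _ _)
  · intro i
    by_cases hcase : (i : ℕ) < P.length + w.length
    · refine ⟨occ S (List.range (P.length + w.length) ++
        List.range' (P.length + 2 * w.length) Q.length) ?_, ?_, ?_, ?_⟩
      · intro t ht
        rcases List.mem_append.mp ht with ht | ht
        · have := List.mem_range.mp ht; omega
        · have := List.mem_range'_1.mp ht; omega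
      · simp only [bind_pure_comp, List.map_eq_map]
        apply occ_chain'
        rw [List.pairwise_append]
        refine ⟨List.pairwise_lt_range, List.pairwise_lt_range', ?_⟩
        intro a ha b hb
        have := List.mem_range.mp ha
        have := (List.mem_range'_1.mp hb).1
        omega
      · exact occ_mem _ _ _ _ (List.mem_append.mpr (Or.inl (List.mem_range.mpr hcase)))
      · rw [occ_spell, List.map_append, List.range_eq_range',
          range'_spell _ _ _ (by omega), range'_spell _ _ _ (by omega),
          List.drop_zero, htake1, hdrop1, List.take_length]
    · refine ⟨occ S (List.range P.length ++
        List.range' (P.length + w.length) (w.length + Q.length)) ?_, ?_, ?_, ?_⟩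
      · intro t ht
        rcases List.mem_append.mp ht with ht | ht
        · have := List.mem_range.mp ht; omega
        · have := List.mem_range'_1.mp ht; omega
      · simp only [bind_pure_comp, List.map_eq_map]
        apply occ_chain'
        rw [List.pairwise_append]
        refine ⟨List.pairwise_lt_range, List.pairwise_lt_range', ?_⟩
        intro a ha b hb
        have := List.mem_range.mp ha
        have := (List.mem_range'_1.mp hb).1
        omega
      · refine occ_mem _ _ _ _ (List.mem_append.mpr (Or.inr (List.mem_range'_1.mpr
          ⟨by omega, ?_⟩)))
        have := i.isLt; omega
      · rw [occ_spell, List.map_append, List.range_eq_range',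
          range'_spell _ _ _ (by omega), range'_spell _ _ _ (by omega),
          List.drop_zero, htake2, hdrop2]
        rw [show w.length + Q.length = (w ++ Q).length by simp, List.take_length,
          List.append_assoc]

lemma three_le_card {S : List ℕ} {x y z : ℕ} (hx : x ∈ S) (hy : y ∈ S) (hz : z ∈ S)
    (hxy : x ≠ y) (hyz : y ≠ z) (hxz : x ≠ z) : 3 ≤ S.toFinset.card := by
  have hsub : ({x, y, z} : Finset ℕ) ⊆ S.toFinset := by
    intro t ht
    simp only [Finset.mem_insert, Finset.mem_singleton] at ht
    rcases ht with rfl | rfl | rfl <;> simpa [List.mem_toFinset]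
  have hc : ({x, y, z} : Finset ℕ).card = 3 := by
    rw [Finset.card_insert_of_notMem (by simp [hxy, hxz]),
      Finset.card_insert_of_notMem (by simp [hyz]), Finset.card_singleton]
  calc 3 = ({x, y, z} : Finset ℕ).card := hc.symm
    _ ≤ S.toFinset.card := Finset.card_le_card hsub

lemma sprim_aba : SPrimitive ([0, 1, 0] : List ℕ) := by
  intro C hC
  by_contra hlt
  push_neg at hlt
  have hm : C ∈ ([0,1,0] : List ℕ).sublists := List.mem_sublists.2 hC.1
  have hsubl : ([0,1,0] : List ℕ).sublists
      = [[], [0], [1], [0, 1], [0], [0, 0], [1, 0], [0, 1, 0]] := by decide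
  rw [hsubl] at hm
  simp only [List.mem_cons, List.not_mem_nil, or_false] at hm
  simp only [List.length_cons, List.length_nil] at hlt
  rcases hm with rfl | rfl | rfl | rfl | rfl | rfl | rfl | rfl
  · obtain ⟨I, hch, hmem, hmap⟩ := hC.2 ⟨0, by norm_num⟩
    simp_all
  · obtain ⟨I, hch, hmem, hmap⟩ := hC.2 ⟨1, by norm_num⟩
    rcases I with _ | ⟨x, _ | ⟨y, I'⟩⟩ <;> simp_all <;> fin_cases x <;> simp_all
  · obtain ⟨I, hch, hmem, hmap⟩ := hC.2 ⟨0, by norm_num⟩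
    rcases I with _ | ⟨x, _ | ⟨y, I'⟩⟩ <;> simp_all <;> fin_cases x <;> simp_all
  · obtain ⟨I, hch, hmem, hmap⟩ := hC.2 ⟨2, by norm_num⟩
    rcases I with _ | ⟨x, _ | ⟨y, _ | ⟨z, I'⟩⟩⟩ <;> simp_all <;>
      fin_cases x <;> fin_cases y <;> simp_all [List.Chain']
  · obtain ⟨I, hch, hmem, hmap⟩ := hC.2 ⟨1, by norm_num⟩
    rcases I with _ | ⟨x, _ | ⟨y, I'⟩⟩ <;> simp_all <;> fin_cases x <;> simp_all
  · obtain ⟨I, hch, hmem, hmap⟩ := hC.2 ⟨1, by norm_num⟩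
    rcases I with _ | ⟨x, _ | ⟨y, _ | ⟨z, I'⟩⟩⟩ <;> simp_all <;>
      fin_cases x <;> fin_cases y <;> simp_all
  · obtain ⟨I, hch, hmem, hmap⟩ := hC.2 ⟨0, by norm_num⟩
    rcases I with _ | ⟨x, _ | ⟨y, _ | ⟨z, I'⟩⟩⟩ <;> simp_all <;>
      fin_cases x <;> fin_cases y <;> simp_all [List.Chain']
  · simp at hlt

lemma binary_long_has_scover (S : List ℕ) (hcard : S.toFinset.card ≤ 2)
    (hlen : 4 ≤ S.length) :
    ∃ C : List ℕ, C.length < S.length ∧ IsSCover C S := by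
  rcases S with _ | ⟨a, _ | ⟨b, _ | ⟨c, _ | ⟨d, T⟩⟩⟩⟩
  · simp at hlen
  · simp at hlen
  · simp at hlen
  · simp at hlen
  by_cases hab : a = b
  · subst hab
    refine ⟨[a] ++ (c :: d :: T), by simp, ?_⟩
    simpa using scover_square [] [a] (c :: d :: T) (by simp)
  by_cases hbc : b = c
  · subst hbc
    refine ⟨[a, b] ++ (d :: T), by simp, ?_⟩
    simpa using scover_square [a] [b] (d :: T) (by simp)
  by_cases hcd : c = d
  · subst hcd
    refine ⟨[a, b, c] ++ T, by simp, ?_⟩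
    simpa using scover_square [a, b] [c] T (by simp)
  · have hca : c = a := by
      by_contra hca
      have := three_le_card (S := a :: b :: c :: d :: T) (x := a) (y := b) (z := c)
        (by simp) (by simp) (by simp) hab hbc (fun h => hca h.symm)
      omega
    have hdb : d = b := by
      by_contra hdb
      have := three_le_card (S := a :: b :: c :: d :: T) (x := a) (y := b) (z := d)
        (by simp) (by simp) (by simp) hab (fun h => hdb h.symm)
        (by rw [← hca]; exact hcd)
      omega
    subst hca; subst hdb
    refine ⟨[c, d] ++ T, by simp, ?_⟩
    simpa using scover_square [] [c, d] T (by simp)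

end Aux

theorem gamma_two (γ : ℕ → ℕ) (hγ : GammaSpec γ) :
    SPrimitive ([0, 1, 0] : List ℕ) ∧
    (∀ S : List ℕ, S.toFinset.card ≤ 2 → 4 ≤ S.length →
      ∃ C : List ℕ, C.length < S.length ∧ IsSCover C S) ∧
    γ 2 = 3 := by
  refine ⟨sprim_aba, binary_long_has_scover, ?_⟩
  have h1 : 3 ≤ γ 2 := (hγ 2).2 ⟨[0, 1, 0], by decide, sprim_aba, rfl⟩
  have h2 : γ 2 ≤ 3 := by
    obtain ⟨S, hcard, hprimS, hlenS⟩ := (hγ 2).1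
    by_contra h
    obtain ⟨C, hCl, hCc⟩ := binary_long_has_scover S hcard (by omega)
    have := hprimS C hCc
    omega
  omega
end

section
/- If a ternary word S contains a factor of the form a b X b c, where a, b, c are pairwise distinct letters and X is a (possibly empty) word over {a,b,c}, then S is not s-primitive; in particular abc is an s-cover of abXbc. -/
lemma isSCover_of_nat {α : Type*} (C S : List α) (hsub : C.Sublist S)
    (h : ∀ i : Fin S.length, ∃ I : List ℕ, I.Chain' (· < ·) ∧ (i : ℕ) ∈ I ∧
      I.map (fun k => S[k]?) = C.map some) :
    IsSCover C S := by
  refine ⟨hsub, fun i => ?_⟩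
  obtain ⟨I, hchain, hmem, hmap⟩ := h i
  have hlt : ∀ k ∈ I, k < S.length := by
    intro k hk
    have : S[k]? ∈ C.map some := by
      rw [← hmap]; exact List.mem_map_of_mem hk
    obtain ⟨x, -, hx⟩ := List.mem_map.1 this
    have : S[k]? ≠ none := by rw [← hx]; simp
    simpa [List.getElem?_eq_none_iff, not_le] using
      (fun hle => this (List.getElem?_eq_none hle))
  refine ⟨I.pmap (fun k hk => (⟨k, hk⟩ : Fin S.length)) hlt, ?_, ?_, ?_⟩
  · simpa [← List.map_eq_flatMap, List.map_pmap, List.pmap_eq_map] using hchain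
  · have : (i : ℕ) ∈ (I.pmap (fun k hk => (⟨k, hk⟩ : Fin S.length)) hlt).map Fin.val := by
      rw [List.map_pmap]; simpa [List.pmap_eq_map] using hmem
    obtain ⟨j, hj, hji⟩ := List.mem_map.1 this
    rwa [show j = i from Fin.ext hji] at hj
  · have : ((I.pmap (fun k hk => (⟨k, hk⟩ : Fin S.length)) hlt).map S.get).map some
        = C.map some := by
      rw [List.map_map, List.map_pmap, ← hmap]
      rw [← List.pmap_eq_map (f := fun k => S[k]?) (l := I) hlt]
      apply List.pmap_congr_left
      intro k hk h1 h2
      simp [List.getElem?_eq_getElem h1]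
    exact List.map_injective_iff.2 (Option.some_injective α) this

lemma range_map_getElem? {α : Type*} (l : List α) :
    (List.range l.length).map (fun k => l[k]?) = l.map some := by
  induction l with
  | nil => simp
  | cons x t ih =>
    rw [List.length_cons, List.range_succ_eq_map, List.map_cons, List.map_map]
    simp only [List.getElem?_cons_zero, List.map_cons]
    congr 1

lemma key {α : Type*} (a b c : α) (X P Q : List α)
    (hX : ∀ x ∈ X, x = a ∨ x = b ∨ x = c) :
    IsSCover (P ++ [a, b, c] ++ Q) (P ++ ([a, b] ++ X ++ [b, c]) ++ Q) := by
  apply isSCover_of_nat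
  · refine List.Sublist.append (List.Sublist.append (List.Sublist.refl P) ?_) (List.Sublist.refl Q)
    refine List.cons_sublist_cons.2 (List.cons_sublist_cons.2 ?_)
    exact List.sublist_append_of_sublist_right (by simp)
  · set S : List α := P ++ ([a, b] ++ X ++ [b, c]) ++ Q with hS
    intro i
    have hSlen : S.length = P.length + (X.length + 4) + Q.length := by
      simp [hS]; omega
    have hmid : ∀ t, S[P.length + t]? = (([a, b] ++ X ++ [b, c]) ++ Q)[t]? := by
      intro t
      rw [hS, List.append_assoc, List.getElem?_append_right (Nat.le_add_right _ _)]
      simp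
    have hBQ : ([a, b] ++ X ++ [b, c]) ++ Q = [a, b] ++ (X ++ ([b] ++ ([c] ++ Q))) := by simp
    have htail : ∀ m, S[P.length + (2 + m)]? = (X ++ ([b] ++ ([c] ++ Q)))[m]? := by
      intro m
      rw [hmid, hBQ, List.getElem?_append_right (show ([a, b] : List α).length ≤ 2 + m by simp)]
      congr 1
      simp
    have hA : S[P.length]? = some a := by
      have := hmid 0; rw [hBQ] at this; simpa using this
    have hb1 : S[P.length + 1]? = some b := by
      have := hmid 1; rw [hBQ] at this; simpa using this
    have hb2 : S[P.length + (2 + X.length)]? = some b := by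
      rw [htail X.length, List.getElem?_append_right le_rfl]
      simp
    have hc1 : S[P.length + (3 + X.length)]? = some c := by
      rw [show 3 + X.length = 2 + (X.length + 1) by omega, htail,
        List.getElem?_append_right (Nat.le_add_right _ _)]
      simp
    have hx : ∀ j (hj : j < X.length), S[P.length + (2 + j)]? = some (X[j]) := by
      intro j hj
      rw [htail j, List.getElem?_append_left hj, List.getElem?_eq_getElem hj]
    have hgP : ∀ k < P.length, S[k]? = P[k]? := by
      intro k hk
      rw [hS, List.append_assoc, List.getElem?_append_left hk]
    have hgQ : ∀ j, S[P.length + (X.length + 4) + j]? = Q[j]? := by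
      intro j
      have hlen : (P ++ ([a, b] ++ X ++ [b, c])).length = P.length + (X.length + 4) := by
        simp
      rw [hS, List.getElem?_append_right (by rw [hlen]; omega), hlen]
      congr 1
      omega
    have main : ∀ p1 p2 p3 : ℕ, P.length ≤ p1 → p1 < p2 → p2 < p3 →
        p3 < P.length + (X.length + 4) →
        S[p1]? = some a → S[p2]? = some b → S[p3]? = some c →
        ∃ I : List ℕ, I.Chain' (· < ·) ∧ [p1, p2, p3] ⊆ I ∧
          I.map (fun k => S[k]?) = (P ++ [a, b, c] ++ Q).map some ∧
          (∀ k < P.length, k ∈ I) ∧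
          (∀ j < Q.length, P.length + (X.length + 4) + j ∈ I) := by
      intro p1 p2 p3 h1 h12 h23 h3 ha hb hc
      refine ⟨List.range P.length ++ [p1, p2, p3] ++
        (List.range Q.length).map (fun j => P.length + (X.length + 4) + j),
        ?_, ?_, ?_, ?_, ?_⟩
      · simp only [List.Chain']; rw [List.isChain_iff_pairwise]
        rw [List.pairwise_append, List.pairwise_append]
        refine ⟨⟨List.pairwise_lt_range, ?_, ?_⟩, ?_, ?_⟩
        · refine List.Pairwise.cons ?_ (List.Pairwise.cons ?_
            (List.Pairwise.cons ?_ List.Pairwise.nil))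
          · intro y hy
            rcases List.mem_cons.1 hy with rfl | hy'
            · omega
            · rcases List.mem_singleton.1 hy' with rfl; omega
          · intro y hy
            rcases List.mem_singleton.1 hy with rfl; omega
          · intro y hy
            exact absurd hy List.not_mem_nil
        · intro x hx' y hy'
          simp only [List.mem_range] at hx'
          simp only [List.mem_cons, List.not_mem_nil, or_false] at hy'
          rcases hy' with rfl | rfl | rfl <;> omega
        · rw [List.pairwise_map]
          exact (List.pairwise_lt_range).imp (by intro x y h; omega)
        · intro x hx' y hy'
          simp only [List.mem_append, List.mem_range, List.mem_cons,
            List.not_mem_nil, or_false] at hx'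
          simp only [List.mem_map, List.mem_range] at hy'
          obtain ⟨j, hj, rfl⟩ := hy'
          rcases hx' with h | rfl | rfl | rfl <;> omega
      · intro x hx'
        simp only [List.mem_append]
        exact Or.inl (Or.inr hx')
      · rw [List.map_append, List.map_append, List.map_append, List.map_append,
          List.map_map]
        congr 1
        congr 1
        · rw [← range_map_getElem? P]
          apply List.map_congr_left
          intro k hk
          exact hgP k (List.mem_range.1 hk)
        · simp [ha, hb, hc]
        · rw [← range_map_getElem? Q]
          apply List.map_congr_left
          intro k hk
          exact hgQ k
      · intro k hk
        simp only [List.mem_append, List.mem_range]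
        exact Or.inl (Or.inl hk)
      · intro j hj
        simp only [List.mem_append, List.mem_map, List.mem_range]
        exact Or.inr ⟨j, hj, rfl⟩
    -- now the case analysis
    have hk : (i : ℕ) < P.length + (X.length + 4) + Q.length := by
      have := i.isLt; omega
    rcases lt_or_ge (i : ℕ) P.length with h1 | h1
    · obtain ⟨I, hch, hsub3, hmap, hmemP, hmemQ⟩ :=
        main P.length (P.length + 1) (P.length + (3 + X.length)) le_rfl (by omega)
          (by omega) (by omega) hA hb1 hc1
      exact ⟨I, hch, hmemP _ h1, hmap⟩
    rcases eq_or_lt_of_le h1 with h2 | h2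
    · obtain ⟨I, hch, hsub3, hmap, hmemP, hmemQ⟩ :=
        main P.length (P.length + 1) (P.length + (3 + X.length)) le_rfl (by omega)
          (by omega) (by omega) hA hb1 hc1
      refine ⟨I, hch, ?_, hmap⟩
      exact h2 ▸ hsub3 (by simp)
    rcases eq_or_lt_of_le (show P.length + 1 ≤ (i : ℕ) by omega) with h3 | h3
    · obtain ⟨I, hch, hsub3, hmap, hmemP, hmemQ⟩ :=
        main P.length (P.length + 1) (P.length + (3 + X.length)) le_rfl (by omega)
          (by omega) (by omega) hA hb1 hc1
      refine ⟨I, hch, ?_, hmap⟩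
      exact h3 ▸ hsub3 (by simp)
    rcases lt_or_ge (i : ℕ) (P.length + (2 + X.length)) with h4 | h4
    · -- in X
      have hj : (i : ℕ) - (P.length + 2) < X.length := by omega
      have hkj : (i : ℕ) = P.length + (2 + ((i : ℕ) - (P.length + 2))) := by omega
      have hxi := hx _ hj
      rw [← hkj] at hxi
      rcases hX _ (X.getElem_mem hj) with hv | hv | hv
      · obtain ⟨I, hch, hsub3, hmap, hmemP, hmemQ⟩ :=
          main (i : ℕ) (P.length + (2 + X.length)) (P.length + (3 + X.length))
            (by omega) (by omega) (by omega) (by omega) (by rw [hxi, hv]) hb2 hc1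
        exact ⟨I, hch, hsub3 (by simp), hmap⟩
      · obtain ⟨I, hch, hsub3, hmap, hmemP, hmemQ⟩ :=
          main P.length (i : ℕ) (P.length + (3 + X.length))
            le_rfl (by omega) (by omega) (by omega) hA (by rw [hxi, hv]) hc1
        exact ⟨I, hch, hsub3 (by simp), hmap⟩
      · obtain ⟨I, hch, hsub3, hmap, hmemP, hmemQ⟩ :=
          main P.length (P.length + 1) (i : ℕ)
            le_rfl (by omega) (by omega) (by omega) hA hb1 (by rw [hxi, hv])
        exact ⟨I, hch, hsub3 (by simp), hmap⟩
    rcases eq_or_lt_of_le h4 with h5 | h5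
    · obtain ⟨I, hch, hsub3, hmap, hmemP, hmemQ⟩ :=
        main P.length (P.length + (2 + X.length)) (P.length + (3 + X.length))
          le_rfl (by omega) (by omega) (by omega) hA hb2 hc1
      refine ⟨I, hch, ?_, hmap⟩
      exact h5 ▸ hsub3 (by simp)
    rcases eq_or_lt_of_le (show P.length + (3 + X.length) ≤ (i : ℕ) by omega) with h6 | h6
    · obtain ⟨I, hch, hsub3, hmap, hmemP, hmemQ⟩ :=
        main P.length (P.length + 1) (P.length + (3 + X.length)) le_rfl (by omega)
          (by omega) (by omega) hA hb1 hc1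
      refine ⟨I, hch, ?_, hmap⟩
      exact h6 ▸ hsub3 (by simp)
    · -- in Q
      obtain ⟨I, hch, hsub3, hmap, hmemP, hmemQ⟩ :=
        main P.length (P.length + 1) (P.length + (3 + X.length)) le_rfl (by omega)
          (by omega) (by omega) hA hb1 hc1
      refine ⟨I, hch, ?_, hmap⟩
      have hj : (i : ℕ) - (P.length + (X.length + 4)) < Q.length := by omega
      have : (i : ℕ) = P.length + (X.length + 4) + ((i : ℕ) - (P.length + (X.length + 4))) := by
        omega
      exact this ▸ hmemQ _ hj


theorem abXbc_not_sPrimitive {α : Type*} (a b c : α)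
    (hab : a ≠ b) (hbc : b ≠ c) (hac : a ≠ c) (X : List α)
    (hX : ∀ x ∈ X, x = a ∨ x = b ∨ x = c) :
    IsSCover [a, b, c] ([a, b] ++ X ++ [b, c]) ∧
    ∀ S P Q : List α, (∀ x ∈ S, x = a ∨ x = b ∨ x = c) →
      S = P ++ ([a, b] ++ X ++ [b, c]) ++ Q → ¬ SPrimitive S := by
  constructor
  · simpa using key a b c X [] [] hX
  · intro S P Q hSabc hSeq hprim
    have hcov : IsSCover (P ++ [a, b, c] ++ Q) S := by
      rw [hSeq]; exact key a b c X P Q hX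
    have hlen := hprim _ hcov
    rw [hSeq] at hlen
    simp at hlen
    omega
end

section
/- Every ternary word of length 9 has a non-trivial s-cover; i.e., γ(3) = 8. -/
namespace SAux
open List

variable {α : Type*}

theorem map_getD_sublist (d : α) :
    ∀ (S : List α) (J : List ℕ), J.Pairwise (· < ·) → (∀ j ∈ J, j < S.length) →
      J.map (fun j => S.getD j d) <+ S := by
  intro S
  induction S with
  | nil =>
    intro J _ hb
    have : J = [] := by
      cases J with
      | nil => rfl
      | cons j J => exact absurd (hb j (mem_cons_self)) (by simp)
    simp [this]
  | cons a S ih =>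
    intro J hp hb
    match J with
    | [] => simp
    | 0 :: J' =>
      have h1 : ∀ j ∈ J', 1 ≤ j := fun j hj => (pairwise_cons.1 hp).1 j hj
      have : J'.map (fun j => (a :: S).getD j d) = (J'.map (· - 1)).map (fun j => S.getD j d) := by
        rw [map_map]
        refine map_congr_left fun j hj => ?_
        obtain ⟨j', rfl⟩ : ∃ j', j = j' + 1 := ⟨j - 1, by have := h1 j hj; omega⟩
        simp
      simp only [map_cons, getD_cons_zero]
      rw [this]
      refine Sublist.cons₂ a (ih _ ?_ ?_)
      · refine (pairwise_map.2 ?_)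
        exact ((pairwise_cons.1 hp).2).imp_of_mem fun {x y} hx hy hxy => by
          have := h1 x hx; have := h1 y hy; omega
      · intro j hj
        simp only [mem_map] at hj
        obtain ⟨j', hj', rfl⟩ := hj
        have hA := hb j' (mem_cons_of_mem _ hj')
        have hB := h1 j' hj'
        simp only [length_cons] at hA
        omega
    | (j + 1) :: J' =>
      have h1 : ∀ k ∈ (j+1) :: J', 1 ≤ k := by
        intro k hk
        rcases mem_cons.1 hk with rfl | hk
        · omega
        · have := (pairwise_cons.1 hp).1 k hk; omega
      have : ((j+1) :: J').map (fun k => (a :: S).getD k d)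
          = (((j+1) :: J').map (· - 1)).map (fun k => S.getD k d) := by
        rw [map_map]
        refine map_congr_left fun k hk => ?_
        obtain ⟨k', rfl⟩ : ∃ k', k = k' + 1 := ⟨k - 1, by have := h1 k hk; omega⟩
        simp
      rw [this]
      refine Sublist.cons a (ih _ ?_ ?_)
      · refine (pairwise_map.2 ?_)
        exact hp.imp_of_mem fun {x y} hx hy hxy => by
          have := h1 x hx; have := h1 y hy; omega
      · intro k hk
        simp only [mem_map] at hk
        obtain ⟨k', hk', rfl⟩ := hk
        have hA := hb k' hk'
        have hB := h1 k' hk'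
        simp only [length_cons] at hA
        omega

theorem sublist_take_of_indices (d : α) {S : List α} {J : List ℕ} {i : ℕ}
    (hp : J.Pairwise (· < ·)) (hb : ∀ j ∈ J, j < i) (hb2 : ∀ j ∈ J, j < S.length) :
    J.map (fun j => S.getD j d) <+ S.take i := by
  have h1 : J.map (fun j => S.getD j d) = J.map (fun j => (S.take i).getD j d) := by
    refine map_congr_left fun j hj => ?_
    have hj1 := hb j hj; have hj2 := hb2 j hj
    rw [getD_eq_getElem _ _ hj2, getD_eq_getElem _ _ (by simp [length_take]; omega),
      getElem_take]
  rw [h1]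
  exact map_getD_sublist d _ _ hp (fun j hj => by
    have := hb j hj; have := hb2 j hj; simp [length_take]; omega)

theorem sublist_drop_of_indices (d : α) {S : List α} {J : List ℕ} {i : ℕ}
    (hp : J.Pairwise (· < ·)) (hb : ∀ j ∈ J, i ≤ j) (hb2 : ∀ j ∈ J, j < S.length) :
    J.map (fun j => S.getD j d) <+ S.drop i := by
  have h1 : J.map (fun j => S.getD j d) = (J.map (· - i)).map (fun j => (S.drop i).getD j d) := by
    rw [map_map]
    refine map_congr_left fun j hj => ?_
    have hj1 := hb j hj; have hj2 := hb2 j hj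
    show S.getD j d = (S.drop i).getD (j - i) d
    rw [getD_eq_getElem _ _ hj2, getD_eq_getElem _ _ (by simp [length_drop]; omega),
      getElem_drop]
    congr 1; omega
  rw [h1]
  refine map_getD_sublist d _ _ ?_ ?_
  · exact (pairwise_map.2 (hp.imp_of_mem fun {x y} hx hy hxy => by
      have := hb x hx; have := hb y hy; omega))
  · intro k hk
    simp only [mem_map] at hk
    obtain ⟨j, hj, rfl⟩ := hk
    have := hb j hj; have := hb2 j hj
    simp [length_drop]; omega

end SAux

-- re-open
namespace SAux
open List
variable {α : Type*}

theorem exists_indices (d : α) {C S : List α} (h : C <+ S) :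
    ∃ J : List ℕ, J.Pairwise (· < ·) ∧ (∀ x ∈ J, x < S.length) ∧
      J.map (fun j => S.getD j d) = C := by
  obtain ⟨f, hf⟩ := sublist_iff_exists_fin_orderEmbedding_get_eq.1 h
  refine ⟨(finRange C.length).map (fun x => (f x).val), ?_, ?_, ?_⟩
  · exact (pairwise_lt_finRange C.length).map _ (fun a b hab => by
      simpa using (OrderEmbedding.lt_iff_lt f).2 hab)
  · intro x hx
    simp only [mem_map] at hx
    obtain ⟨y, _, rfl⟩ := hx
    exact (f y).isLt
  · rw [map_map]
    have : ((fun j => S.getD j d) ∘ fun x : Fin C.length => (f x).val) = C.get := by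
      funext x
      simp only [Function.comp]
      rw [getD_eq_getElem _ _ (f x).isLt]
      exact (hf x).symm
    rw [this, ← ofFn_eq_map, ofFn_get]

theorem exists_indices_take (d : α) {C S : List α} {i : ℕ} (h : C <+ S.take i) :
    ∃ J : List ℕ, J.Pairwise (· < ·) ∧ (∀ x ∈ J, x < i ∧ x < S.length) ∧
      J.map (fun j => S.getD j d) = C := by
  obtain ⟨J, hp, hb, hm⟩ := exists_indices d h
  refine ⟨J, hp, ?_, ?_⟩
  · intro x hx
    have := hb x hx
    simp [length_take] at this
    omega
  · rw [← hm]
    refine map_congr_left fun j hj => ?_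
    have hj1 := hb j hj
    have hj2 : j < i ∧ j < S.length := by simp [length_take] at hj1; omega
    rw [getD_eq_getElem _ _ hj2.2, getD_eq_getElem _ _ hj1, getElem_take]

theorem exists_indices_drop (d : α) {C S : List α} {i : ℕ} (h : C <+ S.drop i) :
    ∃ J : List ℕ, J.Pairwise (· < ·) ∧ (∀ x ∈ J, i ≤ x ∧ x < S.length) ∧
      J.map (fun j => S.getD j d) = C := by
  obtain ⟨J, hp, hb, hm⟩ := exists_indices d h
  refine ⟨J.map (i + ·), ?_, ?_, ?_⟩
  · exact (pairwise_map.2 (hp.imp fun hab => by omega))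
  · intro x hx
    simp only [mem_map] at hx
    obtain ⟨y, hy, rfl⟩ := hx
    have := hb y hy
    simp [length_drop] at this
    omega
  · rw [map_map, ← hm]
    refine map_congr_left fun j hj => ?_
    have hj1 := hb j hj
    have hj2 : i + j < S.length := by simp [length_drop] at hj1; omega
    show S.getD (i + j) d = (S.drop i).getD j d
    rw [getD_eq_getElem _ _ hj2, getD_eq_getElem _ _ hj1, getElem_drop]
end SAux

namespace SAux
open List
variable {α : Type*}

theorem coeFinList (n : ℕ) (I : List (Fin n)) :
    (do let a ← I; pure ((a : ℕ))) = I.map Fin.val := by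
  show I.flatMap (fun (a : Fin n) => [(a : ℕ)]) = I.map Fin.val
  induction I with
  | nil => rfl
  | cons a I ih => simp_all [List.flatMap_cons]

theorem cover_of_splits {C S : List α} (hsub : C <+ S)
    (h : ∀ i, (hi : i < S.length) → ∃ j, ∃ _ : j < C.length, C[j] = S[i] ∧
      C.take j <+ S.take i ∧ C.drop (j+1) <+ S.drop (i+1)) : IsSCover C S := by
  classical
  refine ⟨hsub, fun i => ?_⟩
  have hpos : 0 < S.length := i.pos
  obtain ⟨d, -⟩ : ∃ a : α, True := ⟨S.get i, trivial⟩
  obtain ⟨j, hj, hget, htake, hdrop⟩ := h i.val i.isLt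
  obtain ⟨J1, hp1, hb1, hm1⟩ := exists_indices_take d htake
  obtain ⟨J2, hp2, hb2, hm2⟩ := exists_indices_drop d hdrop
  set toFin : ℕ → Fin S.length := fun k => ⟨k % S.length, Nat.mod_lt _ hpos⟩ with htf
  set J : List ℕ := J1 ++ i.val :: J2 with hJ
  have hJb : ∀ x ∈ J, x < S.length := by
    intro x hx
    rcases mem_append.1 hx with hx | hx
    · exact (hb1 x hx).2
    · rcases mem_cons.1 hx with rfl | hx
      · exact i.isLt
      · exact (hb2 x hx).2
  have hJp : J.Pairwise (· < ·) := by
    rw [hJ, pairwise_append]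
    refine ⟨hp1, pairwise_cons.2 ⟨fun y hy => by have := hb2 y hy; omega, ?_⟩, ?_⟩
    · exact hp2.imp_of_mem fun {a b} ha hb hab => hab
    · intro a ha b hb
      have h1 := (hb1 a ha).1
      rcases mem_cons.1 hb with rfl | hb
      · omega
      · have := (hb2 b hb).1; omega
  have hco : (J.map toFin).map Fin.val = J := by
    rw [map_map]
    have h2 : J.map (Fin.val ∘ toFin) = J.map id := map_congr_left fun k hk => by
      show (toFin k).val = k
      exact Nat.mod_eq_of_lt (hJb k hk)
    rw [h2, map_id]
  refine ⟨J.map toFin, ?_, ?_, ?_⟩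
  · show List.Chain' _ _
    rw [coeFinList, hco]
    exact hJp.isChain
  · refine mem_map.2 ⟨i.val, ?_, ?_⟩
    · exact mem_append_right _ (mem_cons_self)
    · apply Fin.ext
      show i.val % S.length = i.val
      exact Nat.mod_eq_of_lt i.isLt
  · rw [map_map]
    have : J.map (S.get ∘ toFin) = J.map (fun k => S.getD k d) := by
      refine map_congr_left fun k hk => ?_
      have hk' := hJb k hk
      simp only [Function.comp]
      rw [getD_eq_getElem _ _ hk']
      have htk : toFin k = ⟨k, hk'⟩ := Fin.ext (Nat.mod_eq_of_lt hk')
      rw [htk, get_eq_getElem]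
    rw [this, hJ, map_append, map_cons, hm1, hm2]
    have hgi : S.getD i.val d = C[j] := by
      rw [getD_eq_getElem _ _ i.isLt]; exact hget.symm
    rw [hgi]
    conv_rhs => rw [← take_append_drop j C]
    congr 1
    rw [drop_eq_getElem_cons hj]

theorem splits_of_cover {C S : List α} (h : IsSCover C S) {i : ℕ} (hi : i < S.length) :
    ∃ j, ∃ _ : j < C.length, C[j] = S[i] ∧
      C.take j <+ S.take i ∧ C.drop (j+1) <+ S.drop (i+1) := by
  classical
  obtain ⟨d, -⟩ : ∃ a : α, True := ⟨S[i], trivial⟩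
  obtain ⟨I, hc, hm, hmap⟩ := h.2 ⟨i, hi⟩
  obtain ⟨I1, I2, hI⟩ := append_of_mem hm
  subst hI
  rw [coeFinList] at hc
  have hp' := List.isChain_iff_pairwise.1 hc
  rw [pairwise_map] at hp'
  have hp := hp'
  rw [pairwise_append] at hp
  have hb1 : ∀ x ∈ I1, (x : ℕ) < i := fun x hx => hp.2.2 x hx _ (mem_cons_self)
  have hb2 : ∀ x ∈ I2, i < (x : ℕ) := fun x hx => (pairwise_cons.1 hp.2.1).1 x hx
  have hC : C = (I1.map S.get ++ [S.get ⟨i, hi⟩]) ++ I2.map S.get := by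
    rw [← hmap]; simp
  refine ⟨I1.length, ?_, ?_, ?_, ?_⟩
  · rw [hC]; simp only [length_append, length_map, length_cons]; omega
  · have hdC : C[I1.length]? = some S[i] := by
      rw [hC, append_assoc]
      rw [getElem?_append_right (by simp)]
      simp [get_eq_getElem]
    have hb : I1.length < C.length := by
      rw [hC]; simp only [length_append, length_map, length_cons]; omega
    rw [getElem?_eq_getElem hb] at hdC
    exact Option.some.inj hdC
  · have ht : C.take I1.length = I1.map S.get := by
      rw [hC, append_assoc]
      exact take_left' (by simp)
    rw [ht]
    have : I1.map S.get = (I1.map Fin.val).map (fun k => S.getD k d) := by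
      rw [map_map]
      refine map_congr_left fun x _ => ?_
      simp [getD_eq_getElem _ _ x.isLt]
    rw [this]
    refine sublist_take_of_indices d ?_ ?_ ?_
    · rw [pairwise_map]; exact hp.1
    · intro k hk
      simp only [mem_map] at hk
      obtain ⟨x, hx, rfl⟩ := hk
      exact hb1 x hx
    · intro k hk
      simp only [mem_map] at hk
      obtain ⟨x, hx, rfl⟩ := hk
      exact x.isLt
  · have hd : C.drop (I1.length + 1) = I2.map S.get := by
      rw [hC]
      have : I1.length + 1 = (I1.map S.get ++ [S.get ⟨i, hi⟩]).length := by simp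
      rw [this, drop_left]
    rw [hd]
    have : I2.map S.get = (I2.map Fin.val).map (fun k => S.getD k d) := by
      rw [map_map]
      refine map_congr_left fun x _ => ?_
      simp [getD_eq_getElem _ _ x.isLt]
    rw [this]
    refine sublist_drop_of_indices d ?_ ?_ ?_
    · rw [pairwise_map]
      exact (pairwise_cons.1 hp.2.1).2.imp_of_mem fun {a b} _ _ hab => hab
    · intro k hk
      simp only [mem_map] at hk
      obtain ⟨x, hx, rfl⟩ := hk
      have := hb2 x hx; omega
    · intro k hk
      simp only [mem_map] at hk
      obtain ⟨x, hx, rfl⟩ := hk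
      exact x.isLt

end SAux

namespace SAux
open List
variable {α : Type*}

/-- helper for getElem equality via getElem? -/
theorem getElem_eq_opt {l1 l2 : List α} {i j : ℕ} (h1 : i < l1.length) (h2 : j < l2.length)
    (h : l1[i]? = l2[j]?) : l1[i] = l2[j] := by
  rw [getElem?_eq_getElem h1, getElem?_eq_getElem h2] at h
  exact Option.some.inj h

/-- erasing one of two adjacent equal letters gives an s-cover -/
theorem squash_cover (A B : List α) (a : α) :
    IsSCover (A ++ a :: B) (A ++ a :: a :: B) := by
  have hsub : (A ++ a :: B) <+ (A ++ a :: a :: B) :=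
    (Sublist.refl A).append (List.sublist_cons_self a (a :: B))
  refine cover_of_splits hsub ?_
  intro i hi
  have hlenS : (A ++ a :: a :: B).length = A.length + 2 + B.length := by simp; omega
  have hlenC : (A ++ a :: B).length = A.length + 1 + B.length := by simp; omega
  set n := A.length with hn
  have h1 : A ++ a :: B = (A ++ [a]) ++ B := by simp
  have h2 : A ++ a :: a :: B = (A ++ [a]) ++ (a :: B) := by simp
  by_cases hcase : i ≤ n
  · refine ⟨i, by omega, ?_, ?_, ?_⟩
    · refine getElem_eq_opt (by omega) (by omega) ?_
      have g1 : ((A ++ [a]) ++ B)[i]? = (A ++ [a])[i]? :=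
        getElem?_append_left (by simp; omega)
      have g2 : ((A ++ [a]) ++ (a :: B))[i]? = (A ++ [a])[i]? :=
        getElem?_append_left (by simp; omega)
      rw [h1, h2, g1, g2]
    · have t1 : ((A ++ [a]) ++ B).take i = (A ++ [a]).take i :=
        take_append_of_le_length (by simp; omega)
      have t2 : ((A ++ [a]) ++ (a :: B)).take i = (A ++ [a]).take i :=
        take_append_of_le_length (by simp; omega)
      rw [h1, h2, t1, t2]
    · have d1 : ((A ++ [a]) ++ B).drop (i + 1) = (A ++ [a]).drop (i + 1) ++ B :=
        drop_append_of_le_length (by simp; omega)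
      have d2 : ((A ++ [a]) ++ (a :: B)).drop (i + 1) = (A ++ [a]).drop (i + 1) ++ (a :: B) :=
        drop_append_of_le_length (by simp; omega)
      rw [h1, h2, d1, d2]
      exact (Sublist.refl _).append (List.sublist_cons_self a B)
  · push_neg at hcase
    obtain ⟨m, hm⟩ : ∃ m, i - n = m + 1 := ⟨i - n - 1, by omega⟩
    refine ⟨i - 1, by omega, ?_, ?_, ?_⟩
    · refine getElem_eq_opt (by omega) (by omega) ?_
      have g1 : (A ++ a :: B)[i - 1]? = (a :: B)[i - 1 - n]? :=
        getElem?_append_right (by omega)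
      have g2 : (A ++ a :: a :: B)[i]? = (a :: a :: B)[i - n]? :=
        getElem?_append_right (by omega)
      rw [g1, g2, hm, (by omega : i - 1 - n = m)]
      simp
    · have t1 : (A ++ a :: B).take (i - 1) = A.take (i - 1) ++ (a :: B).take (i - 1 - n) :=
        take_append
      have t2 : (A ++ a :: a :: B).take i = A.take i ++ (a :: a :: B).take (i - n) :=
        take_append
      rw [t1, t2, take_of_length_le (by omega : A.length ≤ i - 1),
        take_of_length_le (by omega : A.length ≤ i), hm, (by omega : i - 1 - n = m),
        take_succ_cons]
      exact Sublist.append_left (List.sublist_cons_self a _) A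
    · rw [(by omega : i - 1 + 1 = i)]
      have d1 : (A ++ a :: B).drop i = A.drop i ++ (a :: B).drop (i - n) :=
        drop_append
      have d2 : (A ++ a :: a :: B).drop (i + 1) = A.drop (i + 1) ++ (a :: a :: B).drop (i + 1 - n) :=
        drop_append
      rw [d1, d2, drop_of_length_le (by omega : A.length ≤ i),
        drop_of_length_le (by omega : A.length ≤ i + 1), hm,
        (by omega : i + 1 - n = m + 2)]
      simp

end SAux

namespace SAux
open List
variable {α β : Type*}

/-- an s-cover of `P` extends to an s-cover of `P ++ T` by appending `T`. -/
theorem cover_append {C P : List α} (T : List α) (h : IsSCover C P) :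
    IsSCover (C ++ T) (P ++ T) := by
  refine cover_of_splits (h.1.append (Sublist.refl T)) ?_
  intro i hi
  have hCP : C.length ≤ P.length := h.1.length_le
  have hiPT : i < P.length + T.length := by simpa using hi
  by_cases hcase : i < P.length
  · obtain ⟨j, hj, hget, htake, hdrop⟩ := splits_of_cover h hcase
    refine ⟨j, by simp; omega, ?_, ?_, ?_⟩
    · refine getElem_eq_opt (by simp; omega) (by omega) ?_
      rw [getElem?_append_left (by omega), getElem?_append_left hcase,
        getElem?_eq_getElem hj, getElem?_eq_getElem hcase, hget]
    · have t1 : (C ++ T).take j = C.take j := take_append_of_le_length (by omega)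
      have t2 : (P ++ T).take i = P.take i := take_append_of_le_length (by omega)
      rw [t1, t2]; exact htake
    · have d1 : (C ++ T).drop (j + 1) = C.drop (j + 1) ++ T :=
        drop_append_of_le_length (by omega)
      have d2 : (P ++ T).drop (i + 1) = P.drop (i + 1) ++ T :=
        drop_append_of_le_length (by omega)
      rw [d1, d2]
      exact hdrop.append (Sublist.refl T)
  · push_neg at hcase
    refine ⟨C.length + (i - P.length), by simp; omega, ?_, ?_, ?_⟩
    · refine getElem_eq_opt (by simp; omega) (by omega) ?_
      rw [getElem?_append_right (by omega), getElem?_append_right (by omega)]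
      congr 1
      omega
    · have t1 : (C ++ T).take (C.length + (i - P.length))
          = C.take (C.length + (i - P.length)) ++ T.take (C.length + (i - P.length) - C.length) :=
        take_append
      have t2 : (P ++ T).take i = P.take i ++ T.take (i - P.length) :=
        take_append
      rw [t1, t2, take_of_length_le (by omega : C.length ≤ C.length + (i - P.length)),
        take_of_length_le hcase, (by omega : C.length + (i - P.length) - C.length = i - P.length)]
      exact h.1.append (Sublist.refl _)
    · have d1 : (C ++ T).drop (C.length + (i - P.length) + 1)
          = C.drop (C.length + (i - P.length) + 1) ++ T.drop (C.length + (i - P.length) + 1 - C.length) :=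
        drop_append
      have d2 : (P ++ T).drop (i + 1) = P.drop (i + 1) ++ T.drop (i + 1 - P.length) :=
        drop_append
      rw [d1, d2, drop_of_length_le (by omega : C.length ≤ C.length + (i - P.length) + 1),
        drop_of_length_le (by omega : P.length ≤ i + 1),
        (by omega : C.length + (i - P.length) + 1 - C.length = i + 1 - P.length)]

/-- s-covers are preserved by mapping letters. -/
theorem cover_map {C S : List α} (f : α → β) (h : IsSCover C S) :
    IsSCover (C.map f) (S.map f) := by
  refine cover_of_splits (h.1.map f) ?_
  intro i hi
  have hi' : i < S.length := by simpa using hi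
  obtain ⟨j, hj, hget, htake, hdrop⟩ := splits_of_cover h hi'
  refine ⟨j, by simpa using hj, ?_, ?_, ?_⟩
  · rw [getElem_map, getElem_map, hget]
  · rw [← map_take, ← map_take]
    exact htake.map f
  · rw [← map_drop, ← map_drop]
    exact hdrop.map f

end SAux

namespace SAux
open List

def chk : List ℕ × List ℕ × List ℕ → Bool
  | (S, C, js) =>
    decide (C.Sublist S) && decide (C.length < S.length) &&
    (List.range S.length).all (fun i =>
      decide (js.getD i 0 < C.length) && decide (C.getD (js.getD i 0) 0 = S.getD i 0) &&
      decide ((C.take (js.getD i 0)).Sublist (S.take i)) &&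
      decide ((C.drop (js.getD i 0 + 1)).Sublist (S.drop (i + 1))))

theorem of_chk {S C js : List ℕ} (h : chk (S, C, js) = true) :
    C.length < S.length ∧ IsSCover C S := by
  simp only [chk, Bool.and_eq_true, decide_eq_true_eq, List.all_eq_true, mem_range] at h
  obtain ⟨⟨hsub, hlen⟩, hall⟩ := h
  refine ⟨hlen, cover_of_splits hsub ?_⟩
  intro i hi
  obtain ⟨⟨⟨hjlt, heq⟩, htake⟩, hdrop⟩ := hall i hi
  refine ⟨js.getD i 0, hjlt, ?_, htake, hdrop⟩
  rw [getD_eq_getElem _ _ hjlt, getD_eq_getElem _ _ hi] at heq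
  exact heq

/-- all length-`n` words over `{0,1,2}` with no two adjacent equal letters -/
def eW : ℕ → List (List ℕ)
  | 0 => [[]]
  | n + 1 => (eW n).flatMap fun w =>
      (([0, 1, 2] : List ℕ).filter fun c => decide (w.getLast? ≠ some c)).map fun c => w ++ [c]

theorem mem_eW : ∀ (S : List ℕ), (∀ a ∈ S, a < 3) → S.Chain' (· ≠ ·) → S ∈ eW S.length := by
  intro S
  induction S using List.reverseRecOn with
  | nil => intro _ _; simp [eW]
  | append_singleton w a ih =>
    intro hlt hch
    have hlen : (w ++ [a]).length = w.length + 1 := by simp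
    rw [hlen]
    have hch' := isChain_append.1 hch
    have hw : w ∈ eW w.length :=
      ih (fun x hx => hlt x (mem_append_left _ hx)) hch'.1
    show w ++ [a] ∈ (eW w.length).flatMap _
    refine mem_flatMap.2 ⟨w, hw, ?_⟩
    refine mem_map.2 ⟨a, ?_, rfl⟩
    refine mem_filter.2 ⟨?_, ?_⟩
    · have := hlt a (mem_append_right _ (mem_cons_self))
      interval_cases a <;> simp
    · rw [decide_eq_true_eq]
      intro hcon
      rcases hlast : w.getLast? with _ | x
      · rw [hlast] at hcon; exact nomatch hcon
      · rw [hlast] at hcon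
        have hx := hch'.2.2 x (by rw [hlast]; rfl) a (by simp)
        exact hx (Option.some.inj hcon)

end SAux

namespace SAux

def digs : Nat → Nat → List Nat
  | 0, _ => []
  | fuel + 1, n => if n = 0 then [] else digs fuel (n / 10) ++ [n % 10]

/-- decode a natural (sentinel digit 1 ++ digits) into a word -/
def dec (n : Nat) : List Nat := (digs 12 n).tail

def data : List (Nat × Nat × Nat) := [
(1010101010, 10101010, 1010123456),
(1010101012, 10101012, 1010123456),
(1010101020, 10101020, 1010123456),
(1010101021, 10101021, 1010123456),
(1010101201, 10101201, 1010123456),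
(1010101202, 10101202, 1010123456),
(1010101210, 10101210, 1010123456),
(1010101212, 10101012, 1012345656),
(1010102010, 10102010, 1010123456),
(1010102012, 10102012, 1010123456),
(1010102020, 10101020, 1012345456),
(1010102021, 10101021, 1012345456),
(1010102101, 10102101, 1010123456),
(1010102102, 10102102, 1010123456),
(1010102120, 10102120, 1010123456),
(1010102121, 10101021, 1012345656),
(1010120101, 10101201, 1012345656),
(1010120102, 10120102, 1010123456),
(1010120120, 10120120, 1010123456),
(1010120121, 10120121, 1010123456),
(1010120201, 10101201, 1012345456),
(1010120202, 10101202, 1012345456),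
(1010120210, 10120210, 1010123456),
(1010120212, 10120212, 1010123456),
(1010121010, 10101210, 1012345656),
(1010121012, 10121012, 1010123456),
(1010121020, 10121020, 1010123456),
(1010121021, 10121021, 1010123456),
(1010121201, 10101201, 1012343456),
(1010121202, 10101202, 1012343456),
(1010121210, 10101210, 1012343456),
(1010121212, 10101212, 1012343456),
(1010201010, 10102010, 1012345456),
(1010201012, 10102012, 1012345456),
(1010201020, 101020, 1010301234),
(1010201021, 101021, 1010301234),
(1010201201, 1010201, 1012325345),
(1010201202, 101202, 1010201234),
(1010201210, 1010210, 1012324345),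
(1010201212, 10102012, 1012345656),
(1010202010, 10102010, 1012323456),
(1010202012, 10102012, 1012323456),
(1010202020, 10102020, 1012323456),
(1010202021, 10102021, 1012323456),
(1010202101, 10102101, 1012323456),
(1010202102, 10102102, 1012323456),
(1010202120, 10102120, 1012323456),
(1010202121, 10102021, 1012345656),
(1010210101, 10102101, 1012345456),
(1010210102, 10102102, 1012345456),
(1010210120, 10120, 1010210123),
(1010210121, 101021, 1010312434),
(1010210201, 1010201, 1010312345),
(1010210202, 10102102, 1012345656),
(1010210210, 1010210, 1010312345),
(1010210212, 1010212, 1010312345),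
(1010212010, 1010210, 1012343545),
(1010212012, 1012012, 1010212345),
(1010212020, 10102120, 1012345656),
(1010212021, 1012021, 1010212345),
(1010212101, 10102101, 1012343456),
(1010212102, 10102102, 1012343456),
(1010212120, 10102120, 1012343456),
(1010212121, 10102121, 1012343456),
(1012010101, 10120101, 1012343456),
(1012010102, 10120102, 1012343456),
(1012010120, 10120120, 1012343456),
(1012010121, 10120121, 1012343456),
(1012010201, 101201, 1012013234),
(1012010202, 10120102, 1012345656),
(1012010210, 101210, 1012014234),
(1012010212, 1012012, 1012343545),
(1012012010, 1012010, 1012012345),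
(1012012012, 1012012, 1012012345),
(1012012020, 10120120, 1012345656),
(1012012021, 1012021, 1012012345),
(1012012101, 1012101, 1012012345),
(1012012102, 1012102, 1012012345),
(1012012120, 10120120, 1012345456),
(1012012121, 10120121, 1012345456),
(1012020101, 10120201, 1012345656),
(1012020102, 10120102, 1012323456),
(1012020120, 10120120, 1012323456),
(1012020121, 10120121, 1012323456),
(1012020201, 10120201, 1012323456),
(1012020202, 10120202, 1012323456),
(1012020210, 10120210, 1012323456),
(1012020212, 10120212, 1012323456),
(1012021010, 10120210, 1012345656),
(1012021012, 1012012, 1012324345),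
(1012021020, 10120, 1012021323),
(1012021021, 1012021, 1012325345),
(1012021201, 101201, 1012021234),
(1012021202, 101202, 1012021234),
(1012021210, 10120210, 1012345456),
(1012021212, 10120212, 1012345456),
(1012101010, 10121010, 1012343456),
(1012101012, 10121012, 1012343456),
(1012101020, 10121020, 1012343456),
(1012101021, 10121021, 1012343456),
(1012101201, 101201, 1012101234),
(1012101202, 1012102, 1012343545),
(1012101210, 101210, 1012101234),
(1012101212, 10121012, 1012345656),
(1012102010, 1012010, 1012132345),
(1012102012, 1012012, 1012132345),
(1012102020, 10121020, 1012345456),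
(1012102021, 10121021, 1012345456),
(1012102101, 1012101, 1012142345),
(1012102102, 1012102, 1012142345),
(1012102120, 10120, 1012102123),
(1012102121, 10121021, 1012345656),
(1012120101, 10121201, 1012345656),
(1012120102, 10120102, 1012123456),
(1012120120, 10120120, 1012123456),
(1012120121, 10120121, 1012123456),
(1012120201, 10121201, 1012345456),
(1012120202, 10121202, 1012345456),
(1012120210, 10120210, 1012123456),
(1012120212, 10120212, 1012123456),
(1012121010, 10121210, 1012345656),
(1012121012, 10121012, 1012123456),
(1012121020, 10121020, 1012123456),
(1012121021, 10121021, 1012123456),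
(1012121201, 10121201, 1012123456),
(1012121202, 10121202, 1012123456),
(1012121210, 10121210, 1012123456),
(1012121212, 10121212, 1012123456),
(1020101010, 10201010, 1012323456),
(1020101012, 10201012, 1012323456),
(1020101020, 10201020, 1012323456),
(1020101021, 10201021, 1012323456),
(1020101201, 10201201, 1012323456),
(1020101202, 10201202, 1012323456),
(1020101210, 10201210, 1012323456),
(1020101212, 10201012, 1012345656),
(1020102010, 102010, 1010301234),
(1020102012, 102012, 1010301234),
(1020102020, 10201020, 1012345456),
(1020102021, 10201021, 1012345456),
(1020102101, 102101, 1010201234),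
(1020102102, 1020102, 1012325345),
(1020102120, 1020120, 1012324345),
(1020102121, 10201021, 1012345656),
(1020120101, 10201201, 1012345656),
(1020120102, 1020102, 1010312345),
(1020120120, 1020120, 1010312345),
(1020120121, 1020121, 1010312345),
(1020120201, 10201201, 1012345456),
(1020120202, 10201202, 1012345456),
(1020120210, 10210, 1010210123),
(1020120212, 102012, 1010312434),
(1020121010, 10201210, 1012345656),
(1020121012, 1021012, 1010212345),
(1020121020, 1020120, 1012343545),
(1020121021, 1021021, 1010212345),
(1020121201, 10201201, 1012343456),
(1020121202, 10201202, 1012343456),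
(1020121210, 10201210, 1012343456),
(1020121212, 10201212, 1012343456),
(1020201010, 10202010, 1012345456),
(1020201012, 10202012, 1012345456),
(1020201020, 10201020, 1010123456),
(1020201021, 10201021, 1010123456),
(1020201201, 10201201, 1010123456),
(1020201202, 10201202, 1010123456),
(1020201210, 10201210, 1010123456),
(1020201212, 10202012, 1012345656),
(1020202010, 10202010, 1010123456),
(1020202012, 10202012, 1010123456),
(1020202020, 10202020, 1010123456),
(1020202021, 10202021, 1010123456),
(1020202101, 10202101, 1010123456),
(1020202102, 10202102, 1010123456),
(1020202120, 10202120, 1010123456),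
(1020202121, 10202021, 1012345656),
(1020210101, 10202101, 1012345456),
(1020210102, 10202102, 1012345456),
(1020210120, 10210120, 1010123456),
(1020210121, 10210121, 1010123456),
(1020210201, 10210201, 1010123456),
(1020210202, 10202102, 1012345656),
(1020210210, 10210210, 1010123456),
(1020210212, 10210212, 1010123456),
(1020212010, 10212010, 1010123456),
(1020212012, 10212012, 1010123456),
(1020212020, 10202120, 1012345656),
(1020212021, 10212021, 1010123456),
(1020212101, 10202101, 1012343456),
(1020212102, 10202102, 1012343456),
(1020212120, 10202120, 1012343456),
(1020212121, 10202121, 1012343456),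
(1021010101, 10210101, 1012323456),
(1021010102, 10210102, 1012323456),
(1021010120, 10210120, 1012323456),
(1021010121, 10210121, 1012323456),
(1021010201, 10210201, 1012323456),
(1021010202, 10210102, 1012345656),
(1021010210, 10210210, 1012323456),
(1021010212, 10210212, 1012323456),
(1021012010, 10210, 1012021323),
(1021012012, 1021012, 1012325345),
(1021012020, 10210120, 1012345656),
(1021012021, 1021021, 1012324345),
(1021012101, 102101, 1012021234),
(1021012102, 102102, 1012021234),
(1021012120, 10210120, 1012345456),
(1021012121, 10210121, 1012345456),
(1021020101, 10210201, 1012345656),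
(1021020102, 102102, 1012013234),
(1021020120, 102120, 1012014234),
(1021020121, 1021021, 1012343545),
(1021020201, 10210201, 1012343456),
(1021020202, 10210202, 1012343456),
(1021020210, 10210210, 1012343456),
(1021020212, 10210212, 1012343456),
(1021021010, 10210210, 1012345656),
(1021021012, 1021012, 1012012345),
(1021021020, 1021020, 1012012345),
(1021021021, 1021021, 1012012345),
(1021021201, 1021201, 1012012345),
(1021021202, 1021202, 1012012345),
(1021021210, 10210210, 1012345456),
(1021021212, 10210212, 1012345456),
(1021201010, 10212010, 1012345456),
(1021201012, 10212012, 1012345456),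
(1021201020, 1021020, 1012132345),
(1021201021, 1021021, 1012132345),
(1021201201, 1021201, 1012142345),
(1021201202, 1021202, 1012142345),
(1021201210, 10210, 1012102123),
(1021201212, 10212012, 1012345656),
(1021202010, 10212010, 1012343456),
(1021202012, 10212012, 1012343456),
(1021202020, 10212020, 1012343456),
(1021202021, 10212021, 1012343456),
(1021202101, 1021201, 1012343545),
(1021202102, 102102, 1012101234),
(1021202120, 102120, 1012101234),
(1021202121, 10212021, 1012345656),
(1021210101, 10212101, 1012345456),
(1021210102, 10212102, 1012345456),
(1021210120, 10210120, 1012123456),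
(1021210121, 10210121, 1012123456),
(1021210201, 10210201, 1012123456),
(1021210202, 10212102, 1012345656),
(1021210210, 10210210, 1012123456),
(1021210212, 10210212, 1012123456),
(1021212010, 10212010, 1012123456),
(1021212012, 10212012, 1012123456),
(1021212020, 10212120, 1012345656),
(1021212021, 10212021, 1012123456),
(1021212101, 10212101, 1012123456),
(1021212102, 10212102, 1012123456),
(1021212120, 10212120, 1012123456),
(1021212121, 10212121, 1012123456),
(1101010101, 11010101, 1010123456),
(1101010102, 11010102, 1010123456),
(1101010120, 11010120, 1010123456),
(1101010121, 11010121, 1010123456),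
(1101010201, 11010201, 1010123456),
(1101010202, 11010102, 1012345656),
(1101010210, 11010210, 1010123456),
(1101010212, 11010212, 1010123456),
(1101012010, 11012010, 1010123456),
(1101012012, 11012012, 1010123456),
(1101012020, 11010120, 1012345656),
(1101012021, 11012021, 1010123456),
(1101012101, 11012101, 1010123456),
(1101012102, 11012102, 1010123456),
(1101012120, 11010120, 1012345456),
(1101012121, 11010121, 1012345456),
(1101020101, 11010201, 1012345656),
(1101020102, 11020102, 1010123456),
(1101020120, 11020120, 1010123456),
(1101020121, 11020121, 1010123456),
(1101020201, 11010201, 1012343456),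
(1101020202, 11010202, 1012343456),
(1101020210, 11010210, 1012343456),
(1101020212, 11010212, 1012343456),
(1101021010, 11010210, 1012345656),
(1101021012, 11021012, 1010123456),
(1101021020, 11021020, 1010123456),
(1101021021, 11021021, 1010123456),
(1101021201, 11021201, 1010123456),
(1101021202, 11021202, 1010123456),
(1101021210, 11010210, 1012345456),
(1101021212, 11010212, 1012345456),
(1101201010, 11012010, 1012345456),
(1101201012, 11012012, 1012345456),
(1101201020, 110120, 1010312434),
(1101201021, 11021, 1010210123),
(1101201201, 1101201, 1010312345),
(1101201202, 1101202, 1010312345),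
(1101201210, 1101210, 1010312345),
(1101201212, 11012012, 1012345656),
(1101202010, 11012010, 1012343456),
(1101202012, 11012012, 1012343456),
(1101202020, 11012020, 1012343456),
(1101202021, 11012021, 1012343456),
(1101202101, 1101201, 1012343545),
(1101202102, 1102102, 1010212345),
(1101202120, 1102120, 1010212345),
(1101202121, 11012021, 1012345656),
(1101210101, 11012101, 1012345456),
(1101210102, 11012102, 1012345456),
(1101210120, 110120, 1010301234),
(1101210121, 110121, 1010301234),
(1101210201, 1101201, 1012324345),
(1101210202, 11012102, 1012345656),
(1101210210, 1101210, 1012325345),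
(1101210212, 110212, 1010201234),
(1101212010, 11012010, 1012323456),
(1101212012, 11012012, 1012323456),
(1101212020, 11012120, 1012345656),
(1101212021, 11012021, 1012323456),
(1101212101, 11012101, 1012323456),
(1101212102, 11012102, 1012323456),
(1101212120, 11012120, 1012323456),
(1101212121, 11012121, 1012323456),
(1102010101, 11020101, 1012343456),
(1102010102, 11020102, 1012343456),
(1102010120, 11020120, 1012343456),
(1102010121, 11020121, 1012343456),
(1102010201, 110201, 1012101234),
(1102010202, 11020102, 1012345656),
(1102010210, 110210, 1012101234),
(1102010212, 1102012, 1012343545),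
(1102012010, 1102010, 1012142345),
(1102012012, 1102012, 1012142345),
(1102012020, 11020120, 1012345656),
(1102012021, 11021, 1012102123),
(1102012101, 1102101, 1012132345),
(1102012102, 1102102, 1012132345),
(1102012120, 11020120, 1012345456),
(1102012121, 11020121, 1012345456),
(1102020101, 11020201, 1012345656),
(1102020102, 11020102, 1012123456),
(1102020120, 11020120, 1012123456),
(1102020121, 11020121, 1012123456),
(1102020201, 11020201, 1012123456),
(1102020202, 11020202, 1012123456),
(1102020210, 11020210, 1012123456),
(1102020212, 11020212, 1012123456),
(1102021010, 11020210, 1012345656),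
(1102021012, 11021012, 1012123456),
(1102021020, 11021020, 1012123456),
(1102021021, 11021021, 1012123456),
(1102021201, 11021201, 1012123456),
(1102021202, 11021202, 1012123456),
(1102021210, 11020210, 1012345456),
(1102021212, 11020212, 1012345456),
(1102101010, 11021010, 1012343456),
(1102101012, 11021012, 1012343456),
(1102101020, 11021020, 1012343456),
(1102101021, 11021021, 1012343456),
(1102101201, 110201, 1012014234),
(1102101202, 1102102, 1012343545),
(1102101210, 110210, 1012013234),
(1102101212, 11021012, 1012345656),
(1102102010, 1102010, 1012012345),
(1102102012, 1102012, 1012012345),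
(1102102020, 11021020, 1012345456),
(1102102021, 11021021, 1012345456),
(1102102101, 1102101, 1012012345),
(1102102102, 1102102, 1012012345),
(1102102120, 1102120, 1012012345),
(1102102121, 11021021, 1012345656),
(1102120101, 11021201, 1012345656),
(1102120102, 1102102, 1012324345),
(1102120120, 1102120, 1012325345),
(1102120121, 11021, 1012021323),
(1102120201, 11021201, 1012345456),
(1102120202, 11021202, 1012345456),
(1102120210, 110210, 1012021234),
(1102120212, 110212, 1012021234),
(1102121010, 11021210, 1012345656),
(1102121012, 11021012, 1012323456),
(1102121020, 11021020, 1012323456),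
(1102121021, 11021021, 1012323456),
(1102121201, 11021201, 1012323456),
(1102121202, 11021202, 1012323456),
(1102121210, 11021210, 1012323456),
(1102121212, 11021212, 1012323456),
(1120101010, 11201010, 1012323456),
(1120101012, 11201012, 1012323456),
(1120101020, 11201020, 1012323456),
(1120101021, 11201021, 1012323456),
(1120101201, 11201201, 1012323456),
(1120101202, 11201202, 1012323456),
(1120101210, 11201210, 1012323456),
(1120101212, 11201012, 1012345656),
(1120102010, 112010, 1012021234),
(1120102012, 112012, 1012021234),
(1120102020, 11201020, 1012345456),
(1120102021, 11201021, 1012345456),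
(1120102101, 11201, 1012021323),
(1120102102, 1120102, 1012325345),
(1120102120, 1120120, 1012324345),
(1120102121, 11201021, 1012345656),
(1120120101, 11201201, 1012345656),
(1120120102, 1120102, 1012012345),
(1120120120, 1120120, 1012012345),
(1120120121, 1120121, 1012012345),
(1120120201, 11201201, 1012345456),
(1120120202, 11201202, 1012345456),
(1120120210, 1120210, 1012012345),
(1120120212, 1120212, 1012012345),
(1120121010, 11201210, 1012345656),
(1120121012, 112012, 1012013234),
(1120121020, 1120120, 1012343545),
(1120121021, 112021, 1012014234),
(1120121201, 11201201, 1012343456),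
(1120121202, 11201202, 1012343456),
(1120121210, 11201210, 1012343456),
(1120121212, 11201212, 1012343456),
(1120201010, 11202010, 1012345456),
(1120201012, 11202012, 1012345456),
(1120201020, 11201020, 1012123456),
(1120201021, 11201021, 1012123456),
(1120201201, 11201201, 1012123456),
(1120201202, 11201202, 1012123456),
(1120201210, 11201210, 1012123456),
(1120201212, 11202012, 1012345656),
(1120202010, 11202010, 1012123456),
(1120202012, 11202012, 1012123456),
(1120202020, 11202020, 1012123456),
(1120202021, 11202021, 1012123456),
(1120202101, 11202101, 1012123456),
(1120202102, 11202102, 1012123456),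
(1120202120, 11202120, 1012123456),
(1120202121, 11202021, 1012345656),
(1120210101, 11202101, 1012345456),
(1120210102, 11202102, 1012345456),
(1120210120, 1120120, 1012132345),
(1120210121, 1120121, 1012132345),
(1120210201, 11201, 1012102123),
(1120210202, 11202102, 1012345656),
(1120210210, 1120210, 1012142345),
(1120210212, 1120212, 1012142345),
(1120212010, 1120210, 1012343545),
(1120212012, 112012, 1012101234),
(1120212020, 11202120, 1012345656),
(1120212021, 112021, 1012101234),
(1120212101, 11202101, 1012343456),
(1120212102, 11202102, 1012343456),
(1120212120, 11202120, 1012343456),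
(1120212121, 11202121, 1012343456),
(1121010101, 11210101, 1012323456),
(1121010102, 11210102, 1012323456),
(1121010120, 11210120, 1012323456),
(1121010121, 11210121, 1012323456),
(1121010201, 11210201, 1012323456),
(1121010202, 11210102, 1012345656),
(1121010210, 11210210, 1012323456),
(1121010212, 11210212, 1012323456),
(1121012010, 112010, 1010201234),
(1121012012, 1121012, 1012325345),
(1121012020, 11210120, 1012345656),
(1121012021, 1121021, 1012324345),
(1121012101, 112101, 1010301234),
(1121012102, 112102, 1010301234),
(1121012120, 11210120, 1012345456),
(1121012121, 11210121, 1012345456),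
(1121020101, 11210201, 1012345656),
(1121020102, 1120102, 1010212345),
(1121020120, 1120120, 1010212345),
(1121020121, 1121021, 1012343545),
(1121020201, 11210201, 1012343456),
(1121020202, 11210202, 1012343456),
(1121020210, 11210210, 1012343456),
(1121020212, 11210212, 1012343456),
(1121021010, 11210210, 1012345656),
(1121021012, 1121012, 1010312345),
(1121021020, 1121020, 1010312345),
(1121021021, 1121021, 1010312345),
(1121021201, 11201, 1010210123),
(1121021202, 112102, 1010312434),
(1121021210, 11210210, 1012345456),
(1121021212, 11210212, 1012345456),
(1121201010, 11212010, 1012345456),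
(1121201012, 11212012, 1012345456),
(1121201020, 11201020, 1010123456),
(1121201021, 11201021, 1010123456),
(1121201201, 11201201, 1010123456),
(1121201202, 11201202, 1010123456),
(1121201210, 11201210, 1010123456),
(1121201212, 11212012, 1012345656),
(1121202010, 11212010, 1012343456),
(1121202012, 11212012, 1012343456),
(1121202020, 11212020, 1012343456),
(1121202021, 11212021, 1012343456),
(1121202101, 11202101, 1010123456),
(1121202102, 11202102, 1010123456),
(1121202120, 11202120, 1010123456),
(1121202121, 11212021, 1012345656),
(1121210101, 11212101, 1012345456),
(1121210102, 11212102, 1012345456),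
(1121210120, 11210120, 1010123456),
(1121210121, 11210121, 1010123456),
(1121210201, 11210201, 1010123456),
(1121210202, 11212102, 1012345656),
(1121210210, 11210210, 1010123456),
(1121210212, 11210212, 1010123456),
(1121212010, 11212010, 1010123456),
(1121212012, 11212012, 1010123456),
(1121212020, 11212120, 1012345656),
(1121212021, 11212021, 1010123456),
(1121212101, 11212101, 1010123456),
(1121212102, 11212102, 1010123456),
(1121212120, 11212120, 1010123456),
(1121212121, 11212121, 1010123456),
(1201010101, 12010101, 1012123456),
(1201010102, 12010102, 1012123456),
(1201010120, 12010120, 1012123456),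
(1201010121, 12010121, 1012123456),
(1201010201, 12010201, 1012123456),
(1201010202, 12010102, 1012345656),
(1201010210, 12010210, 1012123456),
(1201010212, 12010212, 1012123456),
(1201012010, 12012010, 1012123456),
(1201012012, 12012012, 1012123456),
(1201012020, 12010120, 1012345656),
(1201012021, 12012021, 1012123456),
(1201012101, 12012101, 1012123456),
(1201012102, 12012102, 1012123456),
(1201012120, 12010120, 1012345456),
(1201012121, 12010121, 1012345456),
(1201020101, 12010201, 1012345656),
(1201020102, 120102, 1012101234),
(1201020120, 120120, 1012101234),
(1201020121, 1201021, 1012343545),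
(1201020201, 12010201, 1012343456),
(1201020202, 12010202, 1012343456),
(1201020210, 12010210, 1012343456),
(1201020212, 12010212, 1012343456),
(1201021010, 12010210, 1012345656),
(1201021012, 12012, 1012102123),
(1201021020, 1201020, 1012142345),
(1201021021, 1201021, 1012142345),
(1201021201, 1201201, 1012132345),
(1201021202, 1201202, 1012132345),
(1201021210, 12010210, 1012345456),
(1201021212, 12010212, 1012345456),
(1201201010, 12012010, 1012345456),
(1201201012, 12012012, 1012345456),
(1201201020, 1201020, 1012012345),
(1201201021, 1201021, 1012012345),
(1201201201, 1201201, 1012012345),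
(1201201202, 1201202, 1012012345),
(1201201210, 1201210, 1012012345),
(1201201212, 12012012, 1012345656),
(1201202010, 12012010, 1012343456),
(1201202012, 12012012, 1012343456),
(1201202020, 12012020, 1012343456),
(1201202021, 12012021, 1012343456),
(1201202101, 1201201, 1012343545),
(1201202102, 120102, 1012014234),
(1201202120, 120120, 1012013234),
(1201202121, 12012021, 1012345656),
(1201210101, 12012101, 1012345456),
(1201210102, 12012102, 1012345456),
(1201210120, 120120, 1012021234),
(1201210121, 120121, 1012021234),
(1201210201, 1201201, 1012324345),
(1201210202, 12012102, 1012345656),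
(1201210210, 1201210, 1012325345),
(1201210212, 12012, 1012021323),
(1201212010, 12012010, 1012323456),
(1201212012, 12012012, 1012323456),
(1201212020, 12012120, 1012345656),
(1201212021, 12012021, 1012323456),
(1201212101, 12012101, 1012323456),
(1201212102, 12012102, 1012323456),
(1201212120, 12012120, 1012323456),
(1201212121, 12012121, 1012323456),
(1202010101, 12020101, 1012343456),
(1202010102, 12020102, 1012343456),
(1202010120, 12020120, 1012343456),
(1202010121, 12020121, 1012343456),
(1202010201, 12010201, 1010123456),
(1202010202, 12020102, 1012345656),
(1202010210, 12010210, 1010123456),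
(1202010212, 12010212, 1010123456),
(1202012010, 12012010, 1010123456),
(1202012012, 12012012, 1010123456),
(1202012020, 12020120, 1012345656),
(1202012021, 12012021, 1010123456),
(1202012101, 12012101, 1010123456),
(1202012102, 12012102, 1010123456),
(1202012120, 12020120, 1012345456),
(1202012121, 12020121, 1012345456),
(1202020101, 12020201, 1012345656),
(1202020102, 12020102, 1010123456),
(1202020120, 12020120, 1010123456),
(1202020121, 12020121, 1010123456),
(1202020201, 12020201, 1010123456),
(1202020202, 12020202, 1010123456),
(1202020210, 12020210, 1010123456),
(1202020212, 12020212, 1010123456),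
(1202021010, 12020210, 1012345656),
(1202021012, 12021012, 1010123456),
(1202021020, 12021020, 1010123456),
(1202021021, 12021021, 1010123456),
(1202021201, 12021201, 1010123456),
(1202021202, 12021202, 1010123456),
(1202021210, 12020210, 1012345456),
(1202021212, 12020212, 1012345456),
(1202101010, 12021010, 1012343456),
(1202101012, 12021012, 1012343456),
(1202101020, 12021020, 1012343456),
(1202101021, 12021021, 1012343456),
(1202101201, 1201201, 1010212345),
(1202101202, 1202102, 1012343545),
(1202101210, 1201210, 1010212345),
(1202101212, 12021012, 1012345656),
(1202102010, 120210, 1010312434),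
(1202102012, 12012, 1010210123),
(1202102020, 12021020, 1012345456),
(1202102021, 12021021, 1012345456),
(1202102101, 1202101, 1010312345),
(1202102102, 1202102, 1010312345),
(1202102120, 1202120, 1010312345),
(1202102121, 12021021, 1012345656),
(1202120101, 12021201, 1012345656),
(1202120102, 1202102, 1012324345),
(1202120120, 1202120, 1012325345),
(1202120121, 120121, 1010201234),
(1202120201, 12021201, 1012345456),
(1202120202, 12021202, 1012345456),
(1202120210, 120210, 1010301234),
(1202120212, 120212, 1010301234),
(1202121010, 12021210, 1012345656),
(1202121012, 12021012, 1012323456),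
(1202121020, 12021020, 1012323456),
(1202121021, 12021021, 1012323456),
(1202121201, 12021201, 1012323456),
(1202121202, 12021202, 1012323456),
(1202121210, 12021210, 1012323456),
(1202121212, 12021212, 1012323456),
(1210101010, 12101010, 1012123456),
(1210101012, 12101012, 1012123456),
(1210101020, 12101020, 1012123456),
(1210101021, 12101021, 1012123456),
(1210101201, 12101201, 1012123456),
(1210101202, 12101202, 1012123456),
(1210101210, 12101210, 1012123456),
(1210101212, 12101012, 1012345656),
(1210102010, 12102010, 1012123456),
(1210102012, 12102012, 1012123456),
(1210102020, 12101020, 1012345456),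
(1210102021, 12101021, 1012345456),
(1210102101, 12102101, 1012123456),
(1210102102, 12102102, 1012123456),
(1210102120, 12102120, 1012123456),
(1210102121, 12101021, 1012345656),
(1210120101, 12101201, 1012345656),
(1210120102, 12102, 1012102123),
(1210120120, 1210120, 1012142345),
(1210120121, 1210121, 1012142345),
(1210120201, 12101201, 1012345456),
(1210120202, 12101202, 1012345456),
(1210120210, 1210210, 1012132345),
(1210120212, 1210212, 1012132345),
(1210121010, 12101210, 1012345656),
(1210121012, 121012, 1012101234),
(1210121020, 1210120, 1012343545),
(1210121021, 121021, 1012101234),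
(1210121201, 12101201, 1012343456),
(1210121202, 12101202, 1012343456),
(1210121210, 12101210, 1012343456),
(1210121212, 12101212, 1012343456),
(1210201010, 12102010, 1012345456),
(1210201012, 12102012, 1012345456),
(1210201020, 121020, 1012021234),
(1210201021, 121021, 1012021234),
(1210201201, 1210201, 1012325345),
(1210201202, 12102, 1012021323),
(1210201210, 1210210, 1012324345),
(1210201212, 12102012, 1012345656),
(1210202010, 12102010, 1012323456),
(1210202012, 12102012, 1012323456),
(1210202020, 12102020, 1012323456),
(1210202021, 12102021, 1012323456),
(1210202101, 12102101, 1012323456),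
(1210202102, 12102102, 1012323456),
(1210202120, 12102120, 1012323456),
(1210202121, 12102021, 1012345656),
(1210210101, 12102101, 1012345456),
(1210210102, 12102102, 1012345456),
(1210210120, 1210120, 1012012345),
(1210210121, 1210121, 1012012345),
(1210210201, 1210201, 1012012345),
(1210210202, 12102102, 1012345656),
(1210210210, 1210210, 1012012345),
(1210210212, 1210212, 1012012345),
(1210212010, 1210210, 1012343545),
(1210212012, 121012, 1012014234),
(1210212020, 12102120, 1012345656),
(1210212021, 121021, 1012013234),
(1210212101, 12102101, 1012343456),
(1210212102, 12102102, 1012343456),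
(1210212120, 12102120, 1012343456),
(1210212121, 12102121, 1012343456),
(1212010101, 12120101, 1012343456),
(1212010102, 12120102, 1012343456),
(1212010120, 12120120, 1012343456),
(1212010121, 12120121, 1012343456),
(1212010201, 1210201, 1010212345),
(1212010202, 12120102, 1012345656),
(1212010210, 1210210, 1010212345),
(1212010212, 1212012, 1012343545),
(1212012010, 1212010, 1010312345),
(1212012012, 1212012, 1010312345),
(1212012020, 12120120, 1012345656),
(1212012021, 1212021, 1010312345),
(1212012101, 121201, 1010312434),
(1212012102, 12102, 1010210123),
(1212012120, 12120120, 1012345456),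
(1212012121, 12120121, 1012345456),
(1212020101, 12120201, 1012345656),
(1212020102, 12120102, 1012323456),
(1212020120, 12120120, 1012323456),
(1212020121, 12120121, 1012323456),
(1212020201, 12120201, 1012323456),
(1212020202, 12120202, 1012323456),
(1212020210, 12120210, 1012323456),
(1212020212, 12120212, 1012323456),
(1212021010, 12120210, 1012345656),
(1212021012, 1212012, 1012324345),
(1212021020, 121020, 1010201234),
(1212021021, 1212021, 1012325345),
(1212021201, 121201, 1010301234),
(1212021202, 121202, 1010301234),
(1212021210, 12120210, 1012345456),
(1212021212, 12120212, 1012345456),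
(1212101010, 12121010, 1012343456),
(1212101012, 12121012, 1012343456),
(1212101020, 12121020, 1012343456),
(1212101021, 12121021, 1012343456),
(1212101201, 12101201, 1010123456),
(1212101202, 12101202, 1010123456),
(1212101210, 12101210, 1010123456),
(1212101212, 12121012, 1012345656),
(1212102010, 12102010, 1010123456),
(1212102012, 12102012, 1010123456),
(1212102020, 12121020, 1012345456),
(1212102021, 12121021, 1012345456),
(1212102101, 12102101, 1010123456),
(1212102102, 12102102, 1010123456),
(1212102120, 12102120, 1010123456),
(1212102121, 12121021, 1012345656),
(1212120101, 12121201, 1012345656),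
(1212120102, 12120102, 1010123456),
(1212120120, 12120120, 1010123456),
(1212120121, 12120121, 1010123456),
(1212120201, 12121201, 1012345456),
(1212120202, 12121202, 1012345456),
(1212120210, 12120210, 1010123456),
(1212120212, 12120212, 1010123456),
(1212121010, 12121210, 1012345656),
(1212121012, 12121012, 1010123456),
(1212121020, 12121020, 1010123456),
(1212121021, 12121021, 1010123456),
(1212121201, 12121201, 1010123456),
(1212121202, 12121202, 1010123456),
(1212121210, 12121210, 1010123456),
(1212121212, 12121212, 1010123456)]

set_option maxRecDepth 1000000 in
set_option maxHeartbeats 8000000 in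
theorem data_chk : (data.all fun e => chk (dec e.1, dec e.2.1, dec e.2.2)) = true := by decide

set_option maxRecDepth 1000000 in
set_option maxHeartbeats 8000000 in
theorem data_words : eW 9 = data.map fun e => dec e.1 := by decide

end SAux

namespace SAux
open List
variable {α : Type*}

theorem chain'_imp_mem {R R' : α → α → Prop} :
    ∀ {l : List α}, (∀ a ∈ l, ∀ b ∈ l, R a b → R' a b) → l.Chain' R → l.Chain' R'
  | [], _, _ => isChain_nil
  | [_], _, _ => isChain_singleton _
  | a :: b :: t, h, hc => by
    rw [Chain', isChain_cons_cons] at hc ⊢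
    refine ⟨h a (by simp) b (by simp) hc.1, ?_⟩
    exact chain'_imp_mem
      (fun x hx y hy => h x (mem_cons_of_mem _ hx) y (mem_cons_of_mem _ hy)) hc.2

theorem exists_adj_repeat : ∀ {l : List α}, ¬ l.Chain' (· ≠ ·) →
    ∃ A a B, l = A ++ a :: a :: B := by
  intro l
  induction l with
  | nil => intro h; exact absurd isChain_nil h
  | cons x t ih =>
    intro h
    cases t with
    | nil => exact absurd (isChain_singleton x) h
    | cons y t' =>
      by_cases hxy : x = y
      · exact ⟨[], x, t', by rw [hxy]; rfl⟩
      · have ht : ¬ (y :: t').Chain' (· ≠ ·) := fun hc => h (isChain_cons_cons.2 ⟨hxy, hc⟩)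
        obtain ⟨A, a, B, hAB⟩ := ih ht
        exact ⟨x :: A, a, B, by rw [hAB]; rfl⟩

theorem main9 (S : List ℕ) (h3 : S.toFinset.card ≤ 3) (h9 : S.length = 9) :
    ∃ C : List ℕ, C.length < S.length ∧ IsSCover C S := by
  by_cases hch : S.Chain' (· ≠ ·)
  · set d := S.dedup with hd
    set σ : ℕ → ℕ := fun a => d.idxOf a with hσ
    set τ : ℕ → ℕ := fun n => d.getD n 0 with hτ
    have hinv : ∀ a ∈ S, τ (σ a) = a := by
      intro a ha
      have had : a ∈ d := mem_dedup.2 ha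
      have hlt := idxOf_lt_length_iff.2 had
      show d.getD (d.idxOf a) 0 = a
      rw [getD_eq_getElem _ _ hlt]
      exact getElem_idxOf hlt
    have hdl : d.length ≤ 3 := by
      rw [hd]
      have := List.card_toFinset S
      omega
    have hlt3 : ∀ b ∈ S.map σ, b < 3 := by
      intro b hb
      obtain ⟨a, ha, rfl⟩ := mem_map.1 hb
      have had : a ∈ d := mem_dedup.2 ha
      have := idxOf_lt_length_iff.2 had
      show d.idxOf a < 3
      omega
    have hch' : (S.map σ).Chain' (· ≠ ·) := by
      rw [Chain', isChain_map]
      refine chain'_imp_mem ?_ hch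
      intro a ha b hb hab hcon
      apply hab
      rw [← hinv a ha, ← hinv b hb, hcon]
    have hmem : S.map σ ∈ eW 9 := by
      have := mem_eW (S.map σ) hlt3 hch'
      rwa [length_map, h9] at this
    rw [data_words] at hmem
    obtain ⟨e, he, heq⟩ := mem_map.1 hmem
    have hchk : chk (dec e.1, dec e.2.1, dec e.2.2) = true := by
      have h := data_chk
      rw [List.all_eq_true] at h
      exact h e he
    obtain ⟨hlen, hcov⟩ := of_chk hchk
    rw [heq] at hlen hcov
    refine ⟨(dec e.2.1).map τ, ?_, ?_⟩
    · rw [length_map]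
      rw [length_map] at hlen
      exact hlen
    · have hmapped := cover_map τ hcov
      have hSS : (S.map σ).map τ = S := by
        rw [map_map]
        exact (map_congr_left fun a ha => hinv a ha).trans (map_id S)
      rwa [hSS] at hmapped
  · obtain ⟨A, a, B, hAB⟩ := exists_adj_repeat hch
    refine ⟨A ++ a :: B, ?_, ?_⟩
    · rw [hAB]
      simp only [length_append, length_cons]
      omega
    · rw [hAB]
      exact squash_cover A B a

def S0 : List ℕ := [0, 1, 2, 0, 1, 0, 2, 1]

def bad (C : List ℕ) : Bool :=
  (List.range 8).all fun i => (List.range C.length).any fun j =>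
    decide (C.getD j 0 = S0.getD i 0) && decide ((C.take j).Sublist (S0.take i)) &&
    decide ((C.drop (j + 1)).Sublist (S0.drop (i + 1)))

set_option maxRecDepth 100000 in
theorem no_short_cover :
    (S0.sublists.all fun C => decide (8 ≤ C.length) || !(bad C)) = true := by decide

theorem sprim : SPrimitive S0 := by
  intro C hC
  by_contra hlen
  push_neg at hlen
  have hS0len : S0.length = 8 := rfl
  rw [hS0len] at hlen
  have hmem : C ∈ S0.sublists := mem_sublists.2 hC.1
  have hbad : bad C = true := by
    rw [bad, List.all_eq_true]
    intro i hi
    rw [List.any_eq_true]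
    have hi' : i < S0.length := by rw [hS0len]; exact mem_range.1 hi
    obtain ⟨j, hj, hget, ht, hd⟩ := splits_of_cover hC hi'
    refine ⟨j, mem_range.2 hj, ?_⟩
    simp only [Bool.and_eq_true, decide_eq_true_eq]
    refine ⟨⟨?_, ht⟩, hd⟩
    rw [getD_eq_getElem _ _ hj, getD_eq_getElem _ _ hi']
    exact hget
  have h := no_short_cover
  rw [List.all_eq_true] at h
  have h2 := h C hmem
  rcases Bool.or_eq_true_iff.1 h2 with h3 | h3
  · rw [decide_eq_true_eq] at h3; omega
  · rw [Bool.not_eq_true'] at h3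
    rw [hbad] at h3
    exact Bool.noConfusion h3

end SAux

theorem gamma_three (γ : ℕ → ℕ) (hγ : GammaSpec γ) :
    (∀ S : List ℕ, S.toFinset.card ≤ 3 → S.length = 9 →
      ∃ C : List ℕ, C.length < S.length ∧ IsSCover C S) ∧
    γ 3 = 8 := by
  constructor
  · exact fun S h3 h9 => SAux.main9 S h3 h9
  · have hg := hγ 3
    have h8mem : 8 ∈ {n : ℕ | ∃ S : List ℕ, S.toFinset.card ≤ 3 ∧ SPrimitive S ∧ S.length = n} :=
      ⟨SAux.S0, by decide, SAux.sprim, rfl⟩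
    refine le_antisymm ?_ (hg.2 h8mem)
    by_contra hcon
    push_neg at hcon
    obtain ⟨S, h3, hp, hlen⟩ := hg.1
    have h9le : 9 ≤ S.length := by omega
    have hPcard : (S.take 9).toFinset.card ≤ 3 := by
      refine le_trans (Finset.card_le_card ?_) h3
      intro x hx
      rw [List.mem_toFinset] at hx ⊢
      exact (List.take_sublist 9 S).subset hx
    have hPlen : (S.take 9).length = 9 := by rw [List.length_take]; omega
    obtain ⟨C, hClen, hCcov⟩ := SAux.main9 (S.take 9) hPcard hPlen
    have hcov2 := SAux.cover_append (S.drop 9) hCcov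
    rw [List.take_append_drop] at hcov2
    have hfin := hp _ hcov2
    rw [List.length_append, List.length_drop] at hfin
    rw [hPlen] at hClen
    omega
end

section
/- If X and Y are square-free words of lengths 4 and 6 respectively, then there exist a length-2 factor a1 a2 of X and a length-2 factor b1 b2 of Y such that a1 ∉ {b1, b2} and b2 ∉ {a1, a2}. -/
/-- A word is square-free if it contains no factor `U ++ U` with `U` nonempty. -/
def SquareFreeWord {α : Type*} (W : List α) : Prop :=
  ∀ U P Q : List α, U ≠ [] → W ≠ P ++ (U ++ U) ++ Q

/-!
Suppose every pair of factors fails, i.e. every factor `u v` of `Y` is *blocked* by `X`: each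
factor `a b` of `X` has `a ∈ {u, v}` or `b = v`. Write `X = x₁x₂x₃x₄`. Applying this to the
middle factor `x₂x₃` and then to the outer ones shows `v ∈ {x₂, x₃}` unless `x₁ = x₄`. In that
case every letter of `Y` but the first lies in `{x₂, x₃}`, and a square-free word over two letters
has length at most three. If `x₁ = x₄`, the blocked factors are exactly the steps of the 3-cycle
`x₁ → x₃ → x₂ → x₁`, so `Y` has period three and is a square.
-/

section

open List

variable {α : Type*}

def Blocked (X : List α) (u v : α) : Prop :=
  ∀ a b, [a, b] <:+: X → a = u ∨ a = v ∨ v = b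

def CycleStep (a b c u v : α) : Prop :=
  (u = a ∧ v = b) ∨ (u = b ∧ v = c) ∨ (u = c ∧ v = a)

theorem CycleStep.eq_of_three_steps {a b c u v w z : α}
    (hab : a ≠ b) (hbc : b ≠ c) (hca : c ≠ a) (huv : CycleStep a b c u v)
    (hvw : CycleStep a b c v w) (hwz : CycleStep a b c w z) : z = u := by
  unfold CycleStep at *
  grind

namespace SquareFreeWord

variable {W : List α}

theorem ne_of_infix (hW : SquareFreeWord W) {a b : α} (hab : [a, b] <:+: W) : a ≠ b := by
  rintro rfl
  obtain ⟨s, t, rfl⟩ := hab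
  exact hW [a] s t (by simp) (by simp)

theorem isChain_ne (hW : SquareFreeWord W) : IsChain (· ≠ ·) W :=
  (isChain_isInfix W).imp fun _ _ => hW.ne_of_infix

theorem length_le_four_of_isChain_eq_or_eq {p q : α} (hW : SquareFreeWord W)
    (hpq : IsChain (fun _ v => v = p ∨ v = q) W) : W.length ≤ 4 := by
  match W, hW, hpq with
  | [], _, _ | [_], _, _ | [_, _], _, _ | [_, _, _], _, _ | [_, _, _, _], _, _ => simp
  | w₀ :: w₁ :: w₂ :: w₃ :: w₄ :: W, hW, hpq =>
    have hne := hW.isChain_ne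
    simp only [isChain_cons_cons] at hne hpq
    have h₁₃ : w₁ = w₃ := by grind
    have h₂₄ : w₂ = w₄ := by grind
    exact (hW [w₁, w₂] [w₀] W (by simp) (by simp [h₁₃, h₂₄])).elim

theorem length_le_five_of_isChain_cycleStep {a b c : α} (hab : a ≠ b) (hbc : b ≠ c)
    (hca : c ≠ a) (hW : SquareFreeWord W) (hcyc : IsChain (CycleStep a b c) W) :
    W.length ≤ 5 := by
  match W, hW, hcyc with
  | [], _, _ | [_], _, _ | [_, _], _, _ | [_, _, _], _, _ | [_, _, _, _], _, _
  | [_, _, _, _, _], _, _ => simp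
  | y₁ :: y₂ :: y₃ :: y₄ :: y₅ :: y₆ :: W, hW, hcyc =>
    simp only [isChain_cons_cons] at hcyc
    obtain ⟨h₁, h₂, h₃, h₄, h₅, -⟩ := hcyc
    have h₄₁ := h₁.eq_of_three_steps hab hbc hca h₂ h₃
    have h₅₂ := h₂.eq_of_three_steps hab hbc hca h₃ h₄
    have h₆₃ := h₃.eq_of_three_steps hab hbc hca h₄ h₅
    exact (hW [y₁, y₂, y₃] [] W (by simp) (by simp [h₄₁, h₅₂, h₆₃])).elim

end SquareFreeWord

namespace Blocked

variable {x₁ x₂ x₃ x₄ u v : α}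

theorem of_four (h : Blocked [x₁, x₂, x₃, x₄] u v) :
    (x₁ = u ∨ x₁ = v ∨ v = x₂) ∧ (x₂ = u ∨ x₂ = v ∨ v = x₃) ∧
      (x₃ = u ∨ x₃ = v ∨ v = x₄) :=
  ⟨h _ _ ⟨[], [x₃, x₄], rfl⟩, h _ _ ⟨[x₁], [x₄], rfl⟩, h _ _ ⟨[x₁, x₂], [], rfl⟩⟩

theorem eq_or_eq (h₁₂ : x₁ ≠ x₂) (h₂₃ : x₂ ≠ x₃) (h₁₄ : x₁ ≠ x₄)
    (h : Blocked [x₁, x₂, x₃, x₄] u v) : v = x₂ ∨ v = x₃ := by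
  grind [h.of_four]

theorem cycleStep (h₁₂ : x₁ ≠ x₂) (h₂₃ : x₂ ≠ x₃) (h₃₁ : x₃ ≠ x₁)
    (h : Blocked [x₁, x₂, x₃, x₁] u v) : CycleStep x₁ x₃ x₂ u v := by
  unfold CycleStep
  grind [h.of_four]

end Blocked

theorem exists_infix_not_blocked {X Y : List α} (hX : X.length = 4) (hY : Y.length = 6)
    (hXsf : SquareFreeWord X) (hYsf : SquareFreeWord Y) :
    ∃ u v, [u, v] <:+: Y ∧ ¬Blocked X u v := by
  by_contra! hblocked
  have hchain : IsChain (Blocked X) Y := (isChain_isInfix Y).imp hblocked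
  obtain ⟨x₁, x₂, x₃, x₄, rfl⟩ := length_eq_four.mp hX
  have hXne := hXsf.isChain_ne
  simp only [isChain_cons_cons, List.IsChain.singleton, and_true] at hXne
  obtain ⟨h₁₂, h₂₃, h₃₄⟩ := hXne
  by_cases h₁₄ : x₁ = x₄
  · subst h₁₄
    have := hYsf.length_le_five_of_isChain_cycleStep h₃₄.symm h₂₃.symm h₁₂.symm
      (hchain.imp fun _ _ h => h.cycleStep h₁₂ h₂₃ h₃₄)
    omega
  · have := hYsf.length_le_four_of_isChain_eq_or_eq
      (hchain.imp fun _ _ h => h.eq_or_eq h₁₂ h₂₃ h₁₄)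
    omega

end

theorem xy_lemma {α : Type*} (X Y : List α)
    (hX : X.length = 4) (hY : Y.length = 6)
    (hXsf : SquareFreeWord X) (hYsf : SquareFreeWord Y) :
    ∃ a1 a2 b1 b2 : α,
      (∃ P Q : List α, X = P ++ [a1, a2] ++ Q) ∧
      (∃ P Q : List α, Y = P ++ [b1, b2] ++ Q) ∧
      a1 ≠ b1 ∧ a1 ≠ b2 ∧ b2 ≠ a1 ∧ b2 ≠ a2 := by
  obtain ⟨b₁, b₂, ⟨P, Q, hY⟩, hnb⟩ := exists_infix_not_blocked hX hY hXsf hYsf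
  simp only [Blocked, not_forall, not_or] at hnb
  obtain ⟨a₁, a₂, ⟨P', Q', hX⟩, ha₁b₁, ha₁b₂, hb₂a₂⟩ := hnb
  exact ⟨a₁, a₂, b₁, b₂, ⟨P', Q', hX.symm⟩, ⟨P, Q, hY.symm⟩, ha₁b₁, ha₁b₂, Ne.symm ha₁b₂,
    hb₂a₂⟩
end
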